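/- arXiv:1011.3451 — 8 statements merged into one kernel-verified Lean document; each statement's English description precedes it below -/
import Mathlib

section
/- If a finite set X is full with respect to a collection C of partitions of X (every two distinct elements of X are separated by some partition in C), then every minimal transversal T for the full subdivisions of C equals sep(a,b) for some pair of distinct elements a, b in X, where sep(a,b) is the set of all partitions in C separating a and b. -/
open scoped RealInnerProductSpace

noncomputable section

def IsPartition {α : Type*} (X : Set α) (P : Set (Set α)) : Prop :=
  (∀ U ∈ P, U.Nonempty) ∧ P.PairwiseDisjoint id ∧ ⋃₀ P = X

def Separates {α : Type*} (P : Set (Set α)) (a b : α) : Prop :=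
  ∃ U ∈ P, ∃ V ∈ P, U ≠ V ∧ a ∈ U ∧ b ∈ V

def IsFull {α : Type*} (X : Set α) (S : Set (Set (Set α))) : Prop :=
  ∀ a ∈ X, ∀ b ∈ X, a ≠ b → ∃ P ∈ S, Separates P a b

def IsTransversal {α : Type*} (X : Set α) (C T : Set (Set (Set α))) : Prop :=
  T ⊆ C ∧ ∀ S ⊆ C, IsFull X S → (S ∩ T).Nonempty

def IsMinimalTransversal {α : Type*} (X : Set α) (C T : Set (Set (Set α))) : Prop :=
  IsTransversal X C T ∧ ∀ T' ⊆ T, IsTransversal X C T' → T' = T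

def sep {α : Type*} (C : Set (Set (Set α))) (a b : α) : Set (Set (Set α)) :=
  {P ∈ C | Separates P a b}

/-! A transversal `T` misses the complement `C \ T`, which therefore is not full: some pair
`a ≠ b` is separated only by members of `T`, i.e. `sep C a b ⊆ T`. Conversely every `sep C a b`
is a transversal, since a full family must separate `a` and `b`. Minimality of `T` then forces
`T = sep C a b`. -/

section

variable {α : Type*} {X : Set α} {C T : Set (Set (Set α))}

theorem isTransversal_sep {a b : α} (ha : a ∈ X) (hb : b ∈ X) (hab : a ≠ b) :
    IsTransversal X C (sep C a b) := by
  refine ⟨fun P hP ↦ hP.1, fun S hSC hS ↦ ?_⟩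
  obtain ⟨P, hPS, hPab⟩ := hS a ha b hb hab
  exact ⟨P, hPS, hSC hPS, hPab⟩

theorem IsTransversal.not_isFull_diff (hT : IsTransversal X C T) : ¬ IsFull X (C \ T) := by
  intro hfull
  obtain ⟨P, ⟨-, hPT⟩, hPT'⟩ := hT.2 (C \ T) Set.sdiff_subset hfull
  exact hPT hPT'

theorem IsTransversal.exists_sep_subset (hT : IsTransversal X C T) :
    ∃ a ∈ X, ∃ b ∈ X, a ≠ b ∧ sep C a b ⊆ T := by
  have hnotfull := hT.not_isFull_diff
  simp only [IsFull, not_forall, not_exists, not_and] at hnotfull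
  obtain ⟨a, ha, b, hb, hab, hsep⟩ := hnotfull
  refine ⟨a, ha, b, hb, hab, fun P hP ↦ ?_⟩
  by_contra hPT
  exact hsep P ⟨hP.1, hPT⟩ hP.2

end

theorem stmt0_general {α : Type*} (X : Set α) (C : Set (Set (Set α)))
    (T : Set (Set (Set α))) (hT : IsMinimalTransversal X C T) :
    ∃ a ∈ X, ∃ b ∈ X, a ≠ b ∧ T = sep C a b := by
  obtain ⟨a, ha, b, hb, hab, hsub⟩ := hT.1.exists_sep_subset
  exact ⟨a, ha, b, hb, hab, (hT.2 _ hsub (isTransversal_sep ha hb hab)).symm⟩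

theorem stmt0 {α : Type*} (X : Set α) (hX : X.Finite) (C : Set (Set (Set α)))
    (hC : ∀ P ∈ C, IsPartition X P) (hfull : IsFull X C)
    (T : Set (Set (Set α))) (hT : IsMinimalTransversal X C T) :
    ∃ a ∈ X, ∃ b ∈ X, a ≠ b ∧ T = sep C a b :=
  stmt0_general X C T hT
end
end

section
/- For a set X of k points in R^d, the number of partitions of X realizable by a hyperplane is at most phi_d(k) = sum_{i=0}^{d} binomial(k-1, i). -/
open scoped RealInnerProductSpace

noncomputable section

abbrev Euc (d : ℕ) : Type := EuclideanSpace ℝ (Fin d)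

def RealizedByHyperplane {d : ℕ} (X : Set (Euc d)) (P : Set (Set (Euc d))) : Prop :=
  P = {X} ∨ ∃ (v : Euc d) (c : ℝ), v ≠ 0 ∧ (∀ x ∈ X, ⟪v, x⟫ ≠ c) ∧
    (X ∩ {x | ⟪v, x⟫ < c}).Nonempty ∧ (X ∩ {x | c < ⟪v, x⟫}).Nonempty ∧
    P = {X ∩ {x | ⟪v, x⟫ < c}, X ∩ {x | c < ⟪v, x⟫}}

def HSet {d : ℕ} (X : Set (Euc d)) : Set (Set (Set (Euc d))) :=
  {P | RealizedByHyperplane X P}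

def GenPos {d : ℕ} (X : Set (Euc d)) : Prop :=
  ∀ (v : Euc d) (c : ℝ), v ≠ 0 → (X ∩ {x | ⟪v, x⟫ = c}).encard ≤ (d : ℕ∞)

def phi (d k : ℕ) : ℕ := ∑ i ∈ Finset.range (d + 1), (k - 1).choose i

def eta (d k : ℕ) : ℕ := ∑ i ∈ Finset.range (d + 1), (k - 2).choose i

/-!
A hyperplane partition of `X` is cut out by an affine function `x ↦ ⟪v, x⟫ - c` (the trivial one
by a constant); after a sign change it is negative at a fixed `x₀ ∈ X`, and then the partition is
determined by its positive side in `X \ {x₀}`. The affine functions form a `(d + 1)`-dimensional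
space of real functions.

For a finite-dimensional space `V` of real functions, count the positive sides cut out of a finite
set `Z` by functions of `V` that do not vanish on `Z` and are negative at an anchor `y₀`. Adding a
point `y` to `Z`, restriction to `Z` is at most two-to-one, and a set with two preimages is cut out
by `f` and `g` with `f y > 0 > g y`, hence also by a positive combination of them vanishing at `y`,
i.e. by a function of the smaller space `V ⊓ ker (eval y)`. By Pascal's rule this gives the bound
`∑ i < dim V, (#Z).choose i`.
-/

open Finset

theorem sum_range_choose_succ_eq (m e : ℕ) :
    ∑ i ∈ range (e + 1), (m + 1).choose i =
      ∑ i ∈ range (e + 1), m.choose i + ∑ i ∈ range e, m.choose i := by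
  simp only [sum_range_succ' _ e, Nat.choose_succ_succ', sum_add_distrib, Nat.choose_zero_right]
  ring

theorem one_le_sum_range_choose {e : ℕ} (he : 0 < e) (m : ℕ) :
    1 ≤ ∑ i ∈ range e, m.choose i :=
  (Nat.choose_zero_right m).symm.le.trans
    (single_le_sum (fun _ _ => Nat.zero_le _) (mem_range.mpr he))

theorem mul_add_mul_sign {a b u v : ℝ} (ha : 0 < a) (hb : 0 < b) (hu : u ≠ 0)
    (huv : 0 < u ↔ 0 < v) : a * u + b * v ≠ 0 ∧ (0 < a * u + b * v ↔ 0 < u) := by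
  rcases hu.lt_or_gt with hu | hu
  · have hv : v ≤ 0 := not_lt.mp fun hv => hu.not_gt (huv.mpr hv)
    have : a * u + b * v < 0 := by nlinarith
    exact ⟨this.ne, iff_of_false this.not_gt hu.not_gt⟩
  · have : 0 < a * u + b * v := by nlinarith [huv.mp hu]
    exact ⟨this.ne', iff_of_true this hu⟩

section Dichotomies

variable {α : Type*}

-- The sign at `y₀` is fixed so that `f` and `-f`, which induce the same partition, count once.
def dichotomies (V : Submodule ℝ (α → ℝ)) (y₀ : α) (Z : Set α) : Set (Set α) :=
  {A | ∃ f ∈ V, f y₀ < 0 ∧ (∀ z ∈ Z, f z ≠ 0) ∧ A = Z ∩ {z | 0 < f z}}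

variable {V : Submodule ℝ (α → ℝ)} {y₀ y : α} {Z : Set α}

theorem dichotomies_finite (hZ : Z.Finite) : (dichotomies V y₀ Z).Finite :=
  hZ.powerset.subset <| by
    rintro _ ⟨f, -, -, -, rfl⟩
    exact Set.inter_subset_left

theorem inter_mem_dichotomies {A : Set α} (hA : A ∈ dichotomies V y₀ (insert y Z)) :
    A ∩ Z ∈ dichotomies V y₀ Z := by
  obtain ⟨f, hf, hfy₀, hfZ, rfl⟩ := hA
  refine ⟨f, hf, hfy₀, fun z hz => hfZ z (Set.mem_insert_of_mem y hz), ?_⟩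
  ext z
  simp only [Set.mem_inter_iff, Set.mem_insert_iff, Set.mem_ofPred_eq]
  tauto

theorem eq_of_inter_eq_of_mem_iff {A B : Set α} (hA : A ⊆ insert y Z) (hB : B ⊆ insert y Z)
    (hAB : A ∩ Z = B ∩ Z) (hy : y ∈ A ↔ y ∈ B) : A = B := by
  ext z
  by_cases hzy : z = y
  · exact hzy ▸ hy
  have key : ∀ C ⊆ insert y Z, z ∈ C ↔ z ∈ C ∩ Z := fun C hC =>
    ⟨fun hz => ⟨hz, (hC hz).resolve_left hzy⟩, And.left⟩
  rw [key A hA, key B hB, hAB]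

theorem inter_mem_dichotomies_inf_ker {A B : Set α}
    (hA : A ∈ dichotomies V y₀ (insert y Z)) (hB : B ∈ dichotomies V y₀ (insert y Z))
    (hyA : y ∈ A) (hyB : y ∉ B) (hAB : A ∩ Z = B ∩ Z) :
    A ∩ Z ∈ dichotomies (V ⊓ LinearMap.ker (LinearMap.proj y)) y₀ Z := by
  obtain ⟨f, hf, hfy₀, hfZ, rfl⟩ := hA
  obtain ⟨g, hg, hgy₀, hgZ, rfl⟩ := hB
  have hfy : 0 < f y := hyA.2
  have hgy : g y < 0 :=
    (hgZ y (Set.mem_insert y Z)).lt_of_le (not_lt.mp fun h => hyB ⟨Set.mem_insert y Z, h⟩)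
  have hsame : ∀ z ∈ Z, 0 < f z ↔ 0 < g z := fun z hz => by
    simpa [hz] using Set.ext_iff.mp hAB z
  have hfZ' : ∀ z ∈ Z, f z ≠ 0 := fun z hz => hfZ z (Set.mem_insert_of_mem y hz)
  refine ⟨(-g y) • f + f y • g, ⟨V.add_mem (V.smul_mem _ hf) (V.smul_mem _ hg), ?_⟩, ?_, ?_, ?_⟩
  · simp only [SetLike.mem_coe, LinearMap.mem_ker, LinearMap.proj_apply, Pi.add_apply,
      Pi.smul_apply, smul_eq_mul]
    ring
  · simp only [Pi.add_apply, Pi.smul_apply, smul_eq_mul]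
    nlinarith
  · intro z hz
    exact (mul_add_mul_sign (neg_pos.mpr hgy) hfy (hfZ' z hz) (hsame z hz)).1
  · ext z
    simp only [Set.mem_inter_iff, Set.mem_insert_iff, Set.mem_ofPred_eq, Pi.add_apply,
      Pi.smul_apply, smul_eq_mul]
    constructor
    · rintro ⟨⟨-, hfz⟩, hz⟩
      exact ⟨hz, (mul_add_mul_sign (neg_pos.mpr hgy) hfy (hfZ' z hz) (hsame z hz)).2.mpr hfz⟩
    · rintro ⟨hz, hpos⟩
      exact ⟨⟨Or.inr hz,
        (mul_add_mul_sign (neg_pos.mpr hgy) hfy (hfZ' z hz) (hsame z hz)).2.mp hpos⟩, hz⟩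

theorem ncard_dichotomies_insert_le (hZ : Z.Finite) :
    (dichotomies V y₀ (insert y Z)).ncard ≤ (dichotomies V y₀ Z).ncard +
      (dichotomies (V ⊓ LinearMap.ker (LinearMap.proj y)) y₀ Z).ncard := by
  set D := dichotomies V y₀ (insert y Z)
  have hD : D.Finite := dichotomies_finite (hZ.insert y)
  have hDsub : ∀ A ∈ D, A ⊆ insert y Z := by
    rintro _ ⟨f, -, -, -, rfl⟩
    exact Set.inter_subset_left
  set Din := D ∩ {A | y ∈ A}
  set Dout := D \ {A | y ∈ A}
  have hinj : ∀ s ⊆ D, (∀ A ∈ s, ∀ B ∈ s, y ∈ A ↔ y ∈ B) → Set.InjOn (· ∩ Z) s :=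
    fun s hs hy A hA B hB hAB =>
      eq_of_inter_eq_of_mem_iff (hDsub A (hs hA)) (hDsub B (hs hB)) hAB (hy A hA B hB)
  have hin : Set.InjOn (· ∩ Z) Din :=
    hinj _ Set.inter_subset_left fun A hA B hB => iff_of_true hA.2 hB.2
  have hout : Set.InjOn (· ∩ Z) Dout :=
    hinj _ Set.sdiff_subset fun A hA B hB => iff_of_false hA.2 hB.2
  have himg : ∀ s ⊆ D, (· ∩ Z) '' s ⊆ dichotomies V y₀ Z := by
    rintro s hs _ ⟨A, hA, rfl⟩
    exact inter_mem_dichotomies (hs hA)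
  have hboth : (· ∩ Z) '' Din ∩ (· ∩ Z) '' Dout ⊆
      dichotomies (V ⊓ LinearMap.ker (LinearMap.proj y)) y₀ Z := by
    rintro _ ⟨⟨A, hA, rfl⟩, ⟨B, hB, hAB⟩⟩
    exact inter_mem_dichotomies_inf_ker hA.1 hB.1 hA.2 hB.2 hAB.symm
  calc D.ncard = Din.ncard + Dout.ncard := (Set.ncard_inter_add_ncard_sdiff_eq_ncard D _ hD).symm
    _ = ((· ∩ Z) '' Din).ncard + ((· ∩ Z) '' Dout).ncard := by
      rw [hin.ncard_image, hout.ncard_image]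
    _ = ((· ∩ Z) '' Din ∪ (· ∩ Z) '' Dout).ncard + ((· ∩ Z) '' Din ∩ (· ∩ Z) '' Dout).ncard :=
      (Set.ncard_union_add_ncard_inter _ _ ((hD.subset Set.inter_subset_left).image _)
        ((hD.subset Set.sdiff_subset).image _)).symm
    _ ≤ _ := add_le_add
      (Set.ncard_le_ncard (Set.union_subset (himg _ Set.inter_subset_left)
        (himg _ Set.sdiff_subset)) (dichotomies_finite hZ))
      (Set.ncard_le_ncard hboth (dichotomies_finite hZ))

theorem dichotomies_empty_subset : dichotomies V y₀ ∅ ⊆ {∅} := by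
  rintro _ ⟨f, -, -, -, rfl⟩
  exact Set.empty_inter _

theorem dichotomies_eq_empty_of_le_ker (hV : V ≤ LinearMap.ker (LinearMap.proj y)) :
    dichotomies V y₀ (insert y Z) = ∅ := by
  refine Set.eq_empty_of_forall_notMem ?_
  rintro _ ⟨f, hf, -, hfZ, -⟩
  exact hfZ y (Set.mem_insert y Z) (hV hf)

theorem finrank_pos_of_dichotomies_nonempty [FiniteDimensional ℝ V]
    (h : (dichotomies V y₀ Z).Nonempty) : 0 < Module.finrank ℝ V := by
  obtain ⟨_, f, hf, hfy₀, -⟩ := h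
  exact Module.finrank_pos_iff_exists_ne_zero.mpr
    ⟨⟨f, hf⟩, fun h0 => hfy₀.ne (by simpa using congrFun (congrArg Subtype.val h0) y₀)⟩

theorem ncard_dichotomies_le (V : Submodule ℝ (α → ℝ)) [FiniteDimensional ℝ V] (y₀ : α)
    (hZ : Z.Finite) :
    (dichotomies V y₀ Z).ncard ≤ ∑ i ∈ range (Module.finrank ℝ V), Z.ncard.choose i := by
  induction Z, hZ using Set.Finite.induction_on generalizing V with
  | empty =>
    rcases (dichotomies V y₀ ∅).eq_empty_or_nonempty with h | h
    · simp [h]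
    · calc (dichotomies V y₀ ∅).ncard ≤ ({∅} : Set (Set α)).ncard :=
            Set.ncard_le_ncard dichotomies_empty_subset
        _ = 1 := Set.ncard_singleton _
        _ ≤ _ := one_le_sum_range_choose (finrank_pos_of_dichotomies_nonempty h) _
  | @insert y Z hy hZ ih =>
    by_cases hV : V ≤ LinearMap.ker (LinearMap.proj y)
    · simp [dichotomies_eq_empty_of_le_ker hV]
    set W := V ⊓ LinearMap.ker (LinearMap.proj y)
    have hW : Module.finrank ℝ W < Module.finrank ℝ V :=
      Submodule.finrank_lt_finrank_of_lt (inf_le_left.lt_of_ne fun h => hV (h ▸ inf_le_right))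
    obtain ⟨e, he⟩ := Nat.exists_eq_add_of_lt hW
    calc (dichotomies V y₀ (insert y Z)).ncard
        ≤ (dichotomies V y₀ Z).ncard + (dichotomies W y₀ Z).ncard :=
          ncard_dichotomies_insert_le hZ
      _ ≤ ∑ i ∈ range (Module.finrank ℝ V), Z.ncard.choose i +
          ∑ i ∈ range (Module.finrank ℝ W), Z.ncard.choose i := add_le_add (ih V) (ih W)
      _ ≤ ∑ i ∈ range (Module.finrank ℝ W + e + 1), Z.ncard.choose i +
          ∑ i ∈ range (Module.finrank ℝ W + e), Z.ncard.choose i := by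
        rw [he]
        gcongr
        exact le_self_add
      _ = ∑ i ∈ range (Module.finrank ℝ V), (insert y Z).ncard.choose i := by
        rw [Set.ncard_insert_of_notMem hy hZ, he, sum_range_choose_succ_eq]

def blockPartition (X A : Set α) : Set (Set α) := {X \ A, A} \ {∅}

theorem sides_mem_image_blockPartition {X : Set α} {x₀ : α} {f : α → ℝ} (hf : f ∈ V)
    (hfx₀ : f x₀ < 0) (hfX : ∀ x ∈ X, f x ≠ 0) :
    ({X ∩ {x | f x < 0}, X ∩ {x | 0 < f x}} : Set (Set α)) \ {∅} ∈
      blockPartition X '' dichotomies V x₀ (X \ {x₀}) := by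
  refine ⟨X ∩ {x | 0 < f x}, ⟨f, hf, hfx₀, fun z hz => hfX z hz.1, ?_⟩, ?_⟩
  · ext x
    simp only [Set.mem_inter_iff, Set.mem_sdiff, Set.mem_singleton_iff, Set.mem_ofPred_eq]
    exact ⟨fun ⟨hx, hfx⟩ => ⟨⟨hx, by rintro rfl; exact hfx₀.not_gt hfx⟩, hfx⟩,
      fun h => ⟨h.1.1, h.2⟩⟩
  · have hneg : X \ (X ∩ {x | 0 < f x}) = X ∩ {x | f x < 0} := by
      ext x
      simp only [Set.mem_sdiff, Set.mem_inter_iff, Set.mem_ofPred_eq, not_and, not_lt]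
      exact ⟨fun ⟨hx, h⟩ => ⟨hx, (h hx).lt_of_ne (hfX x hx)⟩, fun ⟨hx, h⟩ => ⟨hx, fun _ => h.le⟩⟩
    rw [blockPartition, hneg]

theorem pair_sdiff_empty {U W : Set α} (hU : U.Nonempty) (hW : W.Nonempty) :
    ({U, W} : Set (Set α)) \ {∅} = {U, W} :=
  Set.sdiff_singleton_eq_self (by simp [hU.ne_empty.symm, hW.ne_empty.symm])

end Dichotomies

def affineEval (d : ℕ) : Euc d × ℝ →ₗ[ℝ] Euc d → ℝ where
  toFun p x := ⟪p.1, x⟫ - p.2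
  map_add' p q := by
    ext x
    simp only [Prod.fst_add, Prod.snd_add, inner_add_left, Pi.add_apply]
    ring
  map_smul' a p := by
    ext x
    simp only [Prod.smul_fst, Prod.smul_snd, real_inner_smul_left, smul_eq_mul,
      RingHom.id_apply, Pi.smul_apply]
    ring

theorem finrank_range_affineEval_le (d : ℕ) :
    Module.finrank ℝ (affineEval d).range ≤ d + 1 := by
  simpa [Module.finrank_prod] using (affineEval d).finrank_range_le

theorem HSet_subset_image_blockPartition {d : ℕ} {X : Set (Euc d)} {x₀ : Euc d} (hx₀ : x₀ ∈ X) :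
    HSet X ⊆ blockPartition X '' dichotomies (affineEval d).range x₀ (X \ {x₀}) := by
  rintro P (rfl | ⟨v, c, -, hvX, hlt, hgt, rfl⟩)
  · have hconst : affineEval d (0, 1) = fun _ => -1 := by
      ext x
      simp [affineEval]
    have := sides_mem_image_blockPartition (X := X) (x₀ := x₀)
      (hconst ▸ LinearMap.mem_range_self (affineEval d) (0, 1)) (by simp) (by simp)
    convert this using 1
    norm_num
    exact (Set.pair_sdiff_right (Set.nonempty_of_mem hx₀).ne_empty).symm
  · have hg : ∀ x, affineEval d (v, c) x = ⟪v, x⟫ - c := fun x => rfl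
    have hgV := LinearMap.mem_range_self (affineEval d) (v, c)
    have hgX : ∀ x ∈ X, affineEval d (v, c) x ≠ 0 := fun x hx => sub_ne_zero.mpr (hvX x hx)
    rw [← pair_sdiff_empty hlt hgt]
    rcases (hgX x₀ hx₀).lt_or_gt with h | h
    · convert sides_mem_image_blockPartition hgV h hgX using 6 <;> simp [hg]
    · convert sides_mem_image_blockPartition (neg_mem hgV) (neg_lt_zero.mpr h)
        (fun x hx => neg_ne_zero.mpr (hgX x hx)) using 2
      rw [Set.pair_comm]
      simp [hg]

theorem HSet_empty_subset (d : ℕ) : HSet (∅ : Set (Euc d)) ⊆ {{∅}} := by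
  rintro P (rfl | ⟨-, -, -, -, ⟨x, hx, -⟩, -⟩)
  exacts [rfl, hx.elim]

theorem stmt2 {d k : ℕ} (X : Set (Euc d)) (hX : X.Finite) (hk : X.ncard = k) :
    (HSet X).ncard ≤ phi d k := by
  rcases X.eq_empty_or_nonempty with rfl | ⟨x₀, hx₀⟩
  · calc (HSet (∅ : Set (Euc d))).ncard ≤ 1 :=
          (Set.ncard_le_ncard (HSet_empty_subset d)).trans (Set.ncard_singleton _).le
      _ ≤ phi d k := one_le_sum_range_choose d.succ_pos _
  have hD : (dichotomies (affineEval d).range x₀ (X \ {x₀})).Finite :=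
    dichotomies_finite hX.sdiff
  calc (HSet X).ncard
      ≤ (blockPartition X '' dichotomies (affineEval d).range x₀ (X \ {x₀})).ncard :=
        Set.ncard_le_ncard (HSet_subset_image_blockPartition hx₀) (hD.image _)
    _ ≤ (dichotomies (affineEval d).range x₀ (X \ {x₀})).ncard := Set.ncard_image_le hD
    _ ≤ ∑ i ∈ range (Module.finrank ℝ (affineEval d).range), (X \ {x₀}).ncard.choose i :=
        ncard_dichotomies_le _ x₀ hX.sdiff
    _ ≤ phi d k := by
        rw [Set.ncard_sdiff_singleton_of_mem hx₀, hk]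
        exact sum_le_sum_of_subset (range_subset_range.mpr (finrank_range_affineEval_le d))
end
end

section
/- Let X ⊆ R^d be finite and let a, b, c ∈ X be three distinct collinear points with c strictly between a and b. Then every hyperplane-realizable partition of X separating a and c also separates a and b, and there exists a hyperplane-realizable partition of X separating c and b which does not separate a and c; hence sep(a,c) is a proper subset of sep(a,b). -/
open scoped RealInnerProductSpace

noncomputable section

/-! A linear functional `⟪v, ·⟫` maps the open segment `(a, b)` into the open interval between
`⟪v, a⟫` and `⟪v, b⟫`, so a hyperplane `⟪v, ·⟫ = r` with `a` and `c` on opposite sides also has `a`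
and `b` on opposite sides. Conversely, for `v = b - a` the values at `a`, `c`, `b` increase strictly,
and a threshold `r` between `⟪v, c⟫` and `⟪v, b⟫` avoiding the finitely many values on `X` cuts off
`b` from `a` and `c`. -/

open Set

lemma not_separates_singleton {α : Type*} (S : Set α) (x y : α) : ¬ Separates {S} x y := by
  rintro ⟨U, rfl, V, rfl, hUV, -⟩
  exact hUV rfl

lemma lt_of_mem_openSegment_of_lt {a b x : ℝ} (hx : x ∈ openSegment ℝ a b) (hax : a < x) :
    x < b := by
  obtain ⟨s, t, hs, ht, hst, rfl⟩ := hx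
  simp only [smul_eq_mul] at hax ⊢
  obtain rfl : s = 1 - t := by linarith
  nlinarith

lemma lt_of_mem_openSegment_of_gt {a b x : ℝ} (hx : x ∈ openSegment ℝ a b) (hxa : x < a) :
    b < x := by
  obtain ⟨s, t, hs, ht, hst, rfl⟩ := hx
  simp only [smul_eq_mul] at hxa ⊢
  obtain rfl : s = 1 - t := by linarith
  nlinarith

section InnerProductSpace

variable {E : Type*} [NormedAddCommGroup E] [InnerProductSpace ℝ E]

lemma inner_mem_openSegment (v : E) {a b c : E} (hc : c ∈ openSegment ℝ a b) :
    ⟪v, c⟫ ∈ openSegment ℝ ⟪v, a⟫ ⟪v, b⟫ :=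
  image_openSegment ℝ (innerₛₗ ℝ v).toAffineMap a b ▸ mem_image_of_mem _ hc

def halfspacePartition (X : Set E) (v : E) (r : ℝ) : Set (Set E) :=
  {X ∩ {x | ⟪v, x⟫ < r}, X ∩ {x | r < ⟪v, x⟫}}

lemma separates_halfspacePartition_iff {X : Set E} {v x y : E} {r : ℝ} (hx : x ∈ X)
    (hy : y ∈ X) :
    Separates (halfspacePartition X v r) x y ↔
      (⟪v, x⟫ < r ∧ r < ⟪v, y⟫) ∨ (r < ⟪v, x⟫ ∧ ⟪v, y⟫ < r) := by
  constructor
  · rintro ⟨U, hU, V, hV, hUV, hxU, hyV⟩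
    rcases hU with rfl | rfl <;> rcases hV with rfl | rfl
    · exact absurd rfl hUV
    · exact Or.inl ⟨hxU.2, hyV.2⟩
    · exact Or.inr ⟨hxU.2, hyV.2⟩
    · exact absurd rfl hUV
  · rintro (⟨hxr, hry⟩ | ⟨hrx, hyr⟩)
    · refine ⟨_, Or.inl rfl, _, Or.inr rfl, fun h => ?_, ⟨hx, hxr⟩, ⟨hy, hry⟩⟩
      exact (h ▸ ⟨hx, hxr⟩ : x ∈ X ∩ {x | r < ⟪v, x⟫}).2.not_gt hxr
    · refine ⟨_, Or.inr rfl, _, Or.inl rfl, fun h => ?_, ⟨hx, hrx⟩, ⟨hy, hyr⟩⟩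
      exact (h ▸ ⟨hx, hrx⟩ : x ∈ X ∩ {x | ⟪v, x⟫ < r}).2.not_gt hrx

end InnerProductSpace

variable {d : ℕ} {X : Set (Euc d)} {P : Set (Set (Euc d))} {a b c : Euc d}

lemma RealizedByHyperplane.eq_singleton_or_halfspacePartition (hP : RealizedByHyperplane X P) :
    P = {X} ∨ ∃ v r, P = halfspacePartition X v r := by
  rcases hP with hP | ⟨v, r, -, -, -, -, hP⟩
  exacts [Or.inl hP, Or.inr ⟨v, r, hP⟩]

lemma RealizedByHyperplane.separates_of_mem_openSegment (hP : RealizedByHyperplane X P)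
    (ha : a ∈ X) (hb : b ∈ X) (hc : c ∈ X) (hcab : c ∈ openSegment ℝ a b)
    (hac : Separates P a c) : Separates P a b := by
  rcases hP.eq_singleton_or_halfspacePartition with rfl | ⟨v, r, rfl⟩
  · exact absurd hac (not_separates_singleton X a c)
  have hv := inner_mem_openSegment v hcab
  rw [separates_halfspacePartition_iff ha hc] at hac
  rw [separates_halfspacePartition_iff ha hb]
  rcases hac with ⟨har, hrc⟩ | ⟨hra, hcr⟩
  · exact Or.inl ⟨har, hrc.trans (lt_of_mem_openSegment_of_lt hv (har.trans hrc))⟩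
  · exact Or.inr ⟨hra, (lt_of_mem_openSegment_of_gt hv (hcr.trans hra)).trans hcr⟩

lemma exists_realizedByHyperplane_separates_of_mem_openSegment (hX : X.Finite) (ha : a ∈ X)
    (hb : b ∈ X) (hc : c ∈ X) (hab : a ≠ b) (hcab : c ∈ openSegment ℝ a b) :
    ∃ P, RealizedByHyperplane X P ∧ Separates P c b ∧ Separates P a b ∧ ¬ Separates P a c := by
  set v := b - a
  have hv : v ≠ 0 := sub_ne_zero.2 hab.symm
  have hvab : ⟪v, a⟫ < ⟪v, b⟫ := by
    rw [← sub_pos, ← inner_sub_right]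
    exact real_inner_self_pos.2 hv
  have hvc : ⟪v, c⟫ ∈ Ioo ⟪v, a⟫ ⟪v, b⟫ := openSegment_eq_Ioo hvab ▸ inner_mem_openSegment v hcab
  obtain ⟨r, ⟨hcr, hrb⟩, hrX⟩ := ((Ioo_infinite hvc.2).sdiff (hX.image (⟪v, ·⟫))).nonempty
  have har : ⟪v, a⟫ < r := hvc.1.trans hcr
  refine ⟨halfspacePartition X v r,
    Or.inr ⟨v, r, hv, fun x hx h => hrX ⟨x, hx, h⟩, ⟨a, ha, har⟩, ⟨b, hb, hrb⟩, rfl⟩, ?_, ?_, ?_⟩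
  · exact (separates_halfspacePartition_iff hc hb).2 (Or.inl ⟨hcr, hrb⟩)
  · exact (separates_halfspacePartition_iff ha hb).2 (Or.inl ⟨har, hrb⟩)
  · rw [separates_halfspacePartition_iff ha hc]
    rintro (⟨-, hrc⟩ | ⟨hra, -⟩)
    exacts [hcr.not_gt hrc, har.not_gt hra]

theorem stmt4_general {d : ℕ} (X : Set (Euc d)) (hX : X.Finite) (a b c : Euc d)
    (ha : a ∈ X) (hb : b ∈ X) (hc : c ∈ X)
    (hab : a ≠ b)
    (t : ℝ) (ht0 : 0 < t) (ht1 : t < 1) (hbtw : c = t • a + (1 - t) • b) :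
    (∀ P ∈ HSet X, Separates P a c → Separates P a b) ∧
    (∃ P ∈ HSet X, Separates P c b ∧ ¬ Separates P a c) ∧
    sep (HSet X) a c ⊂ sep (HSet X) a b := by
  have hcab : c ∈ openSegment ℝ a b := ⟨t, 1 - t, ht0, sub_pos.2 ht1, by ring, hbtw.symm⟩
  have hsep : ∀ P ∈ HSet X, Separates P a c → Separates P a b := fun _ hP =>
    RealizedByHyperplane.separates_of_mem_openSegment hP ha hb hc hcab
  obtain ⟨P, hP, hcb, hPab, hPac⟩ :=
    exists_realizedByHyperplane_separates_of_mem_openSegment hX ha hb hc hab hcab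
  exact ⟨hsep, ⟨P, hP, hcb, hPac⟩, fun Q hQ => ⟨hQ.1, hsep Q hQ.1 hQ.2⟩,
    fun h => hPac (h ⟨hP, hPab⟩).2⟩

theorem stmt4 {d : ℕ} (X : Set (Euc d)) (hX : X.Finite) (a b c : Euc d)
    (ha : a ∈ X) (hb : b ∈ X) (hc : c ∈ X)
    (hab : a ≠ b) (hac : a ≠ c) (hbc : b ≠ c)
    (t : ℝ) (ht0 : 0 < t) (ht1 : t < 1) (hbtw : c = t • a + (1 - t) • b) :
    (∀ P ∈ HSet X, Separates P a c → Separates P a b) ∧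
    (∃ P ∈ HSet X, Separates P c b ∧ ¬ Separates P a c) ∧
    sep (HSet X) a c ⊂ sep (HSet X) a b :=
  stmt4_general X hX a b c ha hb hc hab t ht0 ht1 hbtw
end
end

section
/- Let X ⊆ R^d be a set of k ≥ 2 points in general position, a ∈ X, and X_a = X \ {a}. Then the restriction map P ↦ P|_{X_a} maps H(X) onto H(X_a), and for each R ∈ H(X_a) there are at most two members P of H(X) with P|_{X_a} = R. -/
/-!
Restricting a hyperplane partition of `X` to `X \ {a}` just intersects the two open halfspaces
with `X \ {a}`, so it is again a hyperplane partition. Conversely, a hyperplane realizing a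
partition of `X \ {a}` may pass through `a`; shifting it slightly, without crossing any of the
finitely many points of `X \ {a}`, makes it avoid `a`, and it then realizes a lift to `X`.
A lift of `R` has at most two blocks and is determined by the block containing `a`: if `R` has two
blocks, `a` joins one of them; if `R = {X \ {a}}`, `a` either joins it or is a block by itself.
-/

open scoped RealInnerProductSpace

noncomputable section

def restrictPart {α : Type*} (P : Set (Set α)) (Y : Set α) : Set (Set α) :=
  {V | ∃ U ∈ P, V = U ∩ Y} \ {∅}

section Restriction

variable {α : Type*}

lemma restrictPart_eq_image (P : Set (Set α)) (Y : Set α) :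
    restrictPart P Y = (· ∩ Y) '' P \ {∅} := by
  ext V
  simp only [restrictPart, Set.mem_sdiff, Set.mem_image, Set.mem_ofPred_eq, eq_comm]

lemma restrictPart_singleton (A Y : Set α) : restrictPart {A} Y = {A ∩ Y} \ {∅} := by
  rw [restrictPart_eq_image, Set.image_singleton]

lemma restrictPart_pair (A B Y : Set α) :
    restrictPart {A, B} Y = {A ∩ Y, B ∩ Y} \ {∅} := by
  rw [restrictPart_eq_image, Set.image_pair]

lemma singleton_sdiff_empty {A : Set α} (hA : A.Nonempty) : ({A} : Set (Set α)) \ {∅} = {A} :=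
  Set.sdiff_singleton_eq_self (by simpa using hA.ne_empty.symm)

lemma pair_sdiff_empty_s7 {A B : Set α} (hA : A.Nonempty) (hB : B.Nonempty) :
    ({A, B} : Set (Set α)) \ {∅} = {A, B} :=
  Set.sdiff_singleton_eq_self (by simp [hA.ne_empty.symm, hB.ne_empty.symm])

lemma pair_eq_of_pair_sdiff_empty_eq {A B U V : Set α} (hUV : U ≠ V)
    (h : ({A, B} : Set (Set α)) \ {∅} = {U, V}) : ({A, B} : Set (Set α)) = {U, V} := by
  have hU : U ∈ ({A, B} : Set (Set α)) \ {∅} := h ▸ Set.mem_insert U {V}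
  have hV : V ∈ ({A, B} : Set (Set α)) \ {∅} := h ▸ Set.mem_insert_of_mem U rfl
  simp only [Set.mem_sdiff, Set.mem_insert_iff, Set.mem_singleton_iff] at hU hV
  rw [Set.pair_eq_pair_iff]
  rcases hU with ⟨rfl | rfl, -⟩ <;> rcases hV with ⟨rfl | rfl, -⟩ <;> tauto

lemma eq_empty_of_pair_sdiff_empty_eq_singleton {A B Y : Set α} (hB : B.Nonempty)
    (hAB : Disjoint A B) (h : ({A, B} : Set (Set α)) \ {∅} = {Y}) : A = ∅ ∧ B = Y := by
  have hmem : ∀ W ∈ ({A, B} : Set (Set α)), W.Nonempty → W = Y := fun W hW hne => by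
    have hW' : W ∈ ({A, B} : Set (Set α)) \ {∅} := ⟨hW, hne.ne_empty⟩
    rwa [h] at hW'
  have hBY : B = Y := hmem B (by simp) hB
  refine ⟨Set.not_nonempty_iff_eq_empty.mp fun hA => hB.ne_empty ?_, hBY⟩
  rw [hmem A (by simp) hA, ← hBY] at hAB
  exact hAB.eq_bot_of_self

lemma restrictPart_singleton_of_subset {X Y : Set α} (hYX : Y ⊆ X) (hY : Y.Nonempty) :
    restrictPart {X} Y = {Y} := by
  rw [restrictPart_singleton, Set.inter_eq_right.mpr hYX, singleton_sdiff_empty hY]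

lemma restrictPart_inter_pair {X Y : Set α} (hYX : Y ⊆ X) (S T : Set α) :
    restrictPart {X ∩ S, X ∩ T} Y = {Y ∩ S, Y ∩ T} \ {∅} := by
  simp only [restrictPart_pair, Set.inter_right_comm X _ Y, Set.inter_eq_right.mpr hYX]

lemma restrictPart_pair_sdiff_singleton {A B X : Set α} {a : α} (hA : A ⊆ X) (hB : B ⊆ X)
    (haB : a ∉ B) : restrictPart {A, B} (X \ {a}) = {A \ {a}, B} \ {∅} := by
  rw [restrictPart_pair, ← Set.inter_sdiff_assoc, Set.inter_eq_left.mpr hA,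
    ← Set.inter_sdiff_assoc, Set.inter_eq_left.mpr hB, Set.sdiff_singleton_eq_self haB]

end Restriction

lemma ncard_le_two_of_subset_pair {β : Type*} {s : Set β} {x y : β} (h : s ⊆ {x, y}) :
    s.ncard ≤ 2 :=
  (Set.ncard_le_ncard h (Set.toFinite _)).trans ((Set.ncard_insert_le _ _).trans (by simp))

lemma exists_ne_forall_lt_iff_of_finite {S : Set ℝ} (hS : S.Finite) {c : ℝ} (hc : c ∉ S)
    (t : ℝ) :
    ∃ c', c' ≠ t ∧ ∀ s ∈ S, (s < c ↔ s < c') ∧ (c < s ↔ c' < s) := by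
  obtain ⟨ε, hε, hball⟩ := Metric.isOpen_iff.mp hS.isClosed.isOpen_compl c hc
  have hfar : ∀ s ∈ S, ε ≤ |s - c| := fun s hs => by
    by_contra! h
    exact hball (by rwa [Metric.mem_ball, Real.dist_eq]) hs
  obtain ⟨c', hc't, hc'c⟩ : ∃ c', c' ≠ t ∧ |c' - c| < ε := by
    by_cases hct : c = t
    · refine ⟨c + ε / 2, by rw [← hct]; linarith, ?_⟩
      rw [add_sub_cancel_left, abs_of_pos (half_pos hε)]
      linarith
    · exact ⟨c, hct, by simpa using hε⟩
  refine ⟨c', hc't, fun s hs => ?_⟩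
  have hs := hfar s hs
  rw [abs_lt] at hc'c
  constructor <;> constructor <;> intro h <;> cases abs_cases (s - c) <;> linarith

section Hyperplane

variable {d : ℕ}

lemma exists_threshold_avoiding {Y : Set (Euc d)} (hY : Y.Finite) {v : Euc d} {c : ℝ}
    (hvc : ∀ y ∈ Y, ⟪v, y⟫ ≠ c) (a : Euc d) :
    ∃ c', (∀ x ∈ insert a Y, ⟪v, x⟫ ≠ c') ∧ Y ∩ {x | ⟪v, x⟫ < c'} = Y ∩ {x | ⟪v, x⟫ < c} ∧
      Y ∩ {x | c' < ⟪v, x⟫} = Y ∩ {x | c < ⟪v, x⟫} := by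
  obtain ⟨c', hc'a, hcut⟩ := exists_ne_forall_lt_iff_of_finite (hY.image (⟪v, ·⟫))
    (fun ⟨y, hy, h⟩ => hvc y hy h) ⟪v, a⟫
  have hcut' : ∀ y ∈ Y, _ := fun y hy => hcut _ (Set.mem_image_of_mem (⟪v, ·⟫) hy)
  refine ⟨c', ?_, ?_, ?_⟩
  · rintro x (rfl | hx) h
    · exact hc'a h.symm
    · obtain ⟨h₁, h₂⟩ := hcut' x hx
      rw [h, lt_self_iff_false, iff_false, not_lt] at h₁ h₂
      exact hvc x hx (h.trans (le_antisymm h₂ h₁))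
  · exact Set.ext fun x => and_congr_right fun hx => (hcut' x hx).1.symm
  · exact Set.ext fun x => and_congr_right fun hx => (hcut' x hx).2.symm

lemma halfspaces_sdiff_empty_mem_HSet {Y : Set (Euc d)} (hY : Y.Nonempty) {v : Euc d} {c : ℝ}
    (hv : v ≠ 0) (hvc : ∀ y ∈ Y, ⟪v, y⟫ ≠ c) :
    ({Y ∩ {x | ⟪v, x⟫ < c}, Y ∩ {x | c < ⟪v, x⟫}} : Set (Set (Euc d))) \ {∅} ∈ HSet Y := by
  rcases (Y ∩ {x | ⟪v, x⟫ < c}).eq_empty_or_nonempty with hL | hL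
  · have hG : Y ∩ {x | c < ⟪v, x⟫} = Y := Set.inter_eq_left.mpr fun y hy =>
      (hvc y hy).lt_or_gt.resolve_left fun h => hL.subset ⟨hy, h⟩
    rw [hL, hG, Set.insert_sdiff_of_mem _ (Set.mem_singleton _), singleton_sdiff_empty hY]
    exact Or.inl rfl
  rcases (Y ∩ {x | c < ⟪v, x⟫}).eq_empty_or_nonempty with hG | hG
  · have hL' : Y ∩ {x | ⟪v, x⟫ < c} = Y := Set.inter_eq_left.mpr fun y hy =>
      (hvc y hy).lt_or_gt.resolve_right fun h => hG.subset ⟨hy, h⟩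
    rw [hL', hG, Set.pair_comm, Set.insert_sdiff_of_mem _ (Set.mem_singleton _),
      singleton_sdiff_empty hY]
    exact Or.inl rfl
  exact Or.inr ⟨v, c, hv, hvc, hL, hG, pair_sdiff_empty_s7 hL hG⟩

lemma restrictPart_mem_HSet {X Y : Set (Euc d)} (hYX : Y ⊆ X) (hY : Y.Nonempty)
    {P : Set (Set (Euc d))} (hP : P ∈ HSet X) : restrictPart P Y ∈ HSet Y := by
  rcases hP with rfl | ⟨v, c, hv, hvc, -, -, rfl⟩
  · rw [restrictPart_singleton_of_subset hYX hY]
    exact Or.inl rfl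
  · rw [restrictPart_inter_pair hYX]
    exact halfspaces_sdiff_empty_mem_HSet hY hv fun y hy => hvc y (hYX hy)

lemma exists_mem_HSet_restrictPart_eq {X : Set (Euc d)} (hX : X.Finite) {a : Euc d}
    (ha : a ∈ X) (hXa : (X \ {a}).Nonempty) {R : Set (Set (Euc d))} (hR : R ∈ HSet (X \ {a})) :
    ∃ P ∈ HSet X, restrictPart P (X \ {a}) = R := by
  rcases hR with rfl | ⟨v, c, hv, hvc, hL, hG, rfl⟩
  · exact ⟨{X}, Or.inl rfl, restrictPart_singleton_of_subset Set.sdiff_subset hXa⟩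
  obtain ⟨c', hc', hL', hG'⟩ := exists_threshold_avoiding (hX.subset Set.sdiff_subset) hvc a
  rw [Set.insert_sdiff_self_of_mem ha] at hc'
  refine ⟨_, Or.inr ⟨v, c', hv, hc', ?_, ?_, rfl⟩, ?_⟩
  · exact (hL'.symm ▸ hL).mono (Set.inter_subset_inter_left _ Set.sdiff_subset)
  · exact (hG'.symm ▸ hG).mono (Set.inter_subset_inter_left _ Set.sdiff_subset)
  · rw [restrictPart_inter_pair Set.sdiff_subset, hL', hG', pair_sdiff_empty_s7 hL hG]

lemma exists_pair_of_mem_HSet {X : Set (Euc d)} {a : Euc d} (ha : a ∈ X)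
    {P : Set (Set (Euc d))} (hP : P ∈ HSet X) (hPX : P ≠ {X}) :
    ∃ A B, P = {A, B} ∧ a ∈ A ∧ A ⊆ X ∧ B ⊆ X ∧ B.Nonempty ∧ Disjoint A B := by
  rcases hP with rfl | ⟨v, c, -, hvc, hL, hG, rfl⟩
  · exact absurd rfl hPX
  have hLG : Disjoint (X ∩ {x | ⟪v, x⟫ < c}) (X ∩ {x | c < ⟪v, x⟫}) :=
    Set.disjoint_left.mpr fun x hx hx' => lt_asymm (α := ℝ) hx.2 hx'.2
  rcases (hvc a ha).lt_or_gt with h | h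
  · exact ⟨_, _, rfl, ⟨ha, h⟩, Set.inter_subset_left, Set.inter_subset_left, hG, hLG⟩
  · exact ⟨_, _, Set.pair_comm _ _, ⟨ha, h⟩, Set.inter_subset_left, Set.inter_subset_left, hL,
      hLG.symm⟩

lemma eq_of_restrictPart_eq_singleton {X : Set (Euc d)} {a : Euc d} (ha : a ∈ X)
    {P : Set (Set (Euc d))} (hP : P ∈ HSet X) (h : restrictPart P (X \ {a}) = {X \ {a}}) :
    P = {X} ∨ P = {{a}, X \ {a}} := by
  by_cases hPX : P = {X}
  · exact Or.inl hPX
  obtain ⟨A, B, rfl, haA, hA, hB, hBne, hAB⟩ := exists_pair_of_mem_HSet ha hP hPX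
  rw [restrictPart_pair_sdiff_singleton hA hB (Set.disjoint_left.mp hAB haA)] at h
  obtain ⟨hA', rfl⟩ :=
    eq_empty_of_pair_sdiff_empty_eq_singleton hBne (hAB.mono_left Set.sdiff_subset) h
  rw [(Set.Nonempty.subset_singleton_iff ⟨a, haA⟩).mp (Set.sdiff_eq_empty.mp hA')]
  exact Or.inr rfl

lemma eq_of_restrictPart_eq_pair {X : Set (Euc d)} {a : Euc d} (ha : a ∈ X)
    {P : Set (Set (Euc d))} (hP : P ∈ HSet X) {U V : Set (Euc d)} (hUV : U ≠ V)
    (h : restrictPart P (X \ {a}) = {U, V}) : P = {insert a U, V} ∨ P = {U, insert a V} := by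
  have hPX : P ≠ {X} := by
    rintro rfl
    have hsub : (restrictPart {X} (X \ {a})).Subsingleton := by
      rw [restrictPart_singleton]
      exact Set.subsingleton_singleton.anti Set.sdiff_subset
    rw [h] at hsub
    exact hUV (hsub (Set.mem_insert U {V}) (Set.mem_insert_of_mem U rfl))
  obtain ⟨A, B, rfl, haA, hA, hB, -, hAB⟩ := exists_pair_of_mem_HSet ha hP hPX
  rw [restrictPart_pair_sdiff_singleton hA hB (Set.disjoint_left.mp hAB haA)] at h
  rw [← Set.insert_sdiff_self_of_mem haA]
  rcases Set.pair_eq_pair_iff.mp (pair_eq_of_pair_sdiff_empty_eq hUV h) with ⟨hU, hV⟩ | ⟨hV, hU⟩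
  · exact Or.inl (by rw [hU, hV])
  · exact Or.inr (by rw [hU, hV, Set.pair_comm])

end Hyperplane

theorem stmt7_general {d k : ℕ} (X : Set (Euc d)) (hX : X.Finite) (hk : X.ncard = k)
    (hk2 : 2 ≤ k) (a : Euc d) (ha : a ∈ X) :
    (fun P => restrictPart P (X \ {a})) '' HSet X = HSet (X \ {a}) ∧
    ∀ R ∈ HSet (X \ {a}),
      {P ∈ HSet X | restrictPart P (X \ {a}) = R}.ncard ≤ 2 := by
  have hXa : (X \ {a}).Nonempty :=
    Set.nonempty_of_ncard_ne_zero (by rw [Set.ncard_sdiff_singleton_of_mem ha]; omega)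
  refine ⟨Set.Subset.antisymm ?_ fun R hR => exists_mem_HSet_restrictPart_eq hX ha hXa hR,
    fun R hR => ?_⟩
  · rintro _ ⟨P, hP, rfl⟩
    exact restrictPart_mem_HSet Set.sdiff_subset hXa hP
  rcases hR with rfl | ⟨v, c, -, -, hL, -, rfl⟩
  · exact ncard_le_two_of_subset_pair fun P ⟨hP, h⟩ => eq_of_restrictPart_eq_singleton ha hP h
  · have hLG : X \ {a} ∩ {x | ⟪v, x⟫ < c} ≠ X \ {a} ∩ {x | c < ⟪v, x⟫} := fun h =>
      have ⟨x, hx⟩ := hL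
      lt_asymm (α := ℝ) hx.2 (h ▸ hx).2
    exact ncard_le_two_of_subset_pair fun P ⟨hP, h⟩ => eq_of_restrictPart_eq_pair ha hP hLG h

theorem stmt7 {d k : ℕ} (X : Set (Euc d)) (hX : X.Finite) (hk : X.ncard = k)
    (hk2 : 2 ≤ k) (hgp : GenPos X) (a : Euc d) (ha : a ∈ X) :
    (fun P => restrictPart P (X \ {a})) '' HSet X = HSet (X \ {a}) ∧
    ∀ R ∈ HSet (X \ {a}),
      {P ∈ HSet X | restrictPart P (X \ {a}) = R}.ncard ≤ 2 :=
  stmt7_general X hX hk hk2 a ha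
end
end

section
/- Let X be a finite two-colored subset of R^d and p ∈ X. If every subset S ⊆ X with p ∈ S and |S| ≤ d+2 can be separated along the colors by a hyperplane, then all of X can be separated along the colors by a hyperplane. -/
open scoped RealInnerProductSpace

noncomputable section

def SepAlongColors {d : ℕ} (red : Euc d → Prop) (S : Set (Euc d)) : Prop :=
  ∃ (v : Euc d) (c : ℝ), v ≠ 0 ∧
    (∀ x ∈ S, red x → c < ⟪v, x⟫) ∧ (∀ x ∈ S, ¬ red x → ⟪v, x⟫ < c)


/-! Rescale a separating pair `(v, c)` of a set containing `p` so that `p` has signed value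
`colorSign red p * (⟪v, p⟫ - c) = 1`. This pins the threshold to `c = ⟪v, p⟫ - colorSign red p`,
and for each point `x` the normals `v` that put `x` on the side of its color form an open halfspace
of `ℝ^d` (`pinnedSeparators red p x`). Applied to `d + 1` points together with `p`, the hypothesis
makes any `d + 1` of these halfspaces intersect, so by Helly's theorem all of them do. Their
intersection is open, hence contains a nonzero normal, and that normal separates `X`. -/

open Topology in
theorem IsOpen.exists_mem_ne {X : Type*} [TopologicalSpace X] [∀ x : X, Filter.NeBot (𝓝[≠] x)]
    {U : Set X} (hU : IsOpen U) (hne : U.Nonempty) (a : X) : ∃ v ∈ U, v ≠ a := by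
  obtain ⟨w, hw⟩ := hne
  by_cases hwa : w = a
  · subst hwa
    exact Filter.nonempty_of_mem (f := 𝓝[≠] w)
      (Filter.inter_mem (nhdsWithin_le_nhds (hU.mem_nhds hw)) self_mem_nhdsWithin)
  · exact ⟨w, hw, hwa⟩

section PinnedSeparators

variable {d : ℕ} (red : Euc d → Prop)

open Classical in
def colorSign (x : Euc d) : ℝ := if red x then 1 else -1

theorem colorSign_mul_self (x : Euc d) : colorSign red x * colorSign red x = 1 := by
  unfold colorSign; split_ifs <;> norm_num

theorem sepAlongColors_iff_exists_colorSign_mul_pos (S : Set (Euc d)) :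
    SepAlongColors red S ↔
      ∃ (v : Euc d) (c : ℝ), v ≠ 0 ∧ ∀ x ∈ S, 0 < colorSign red x * (⟪v, x⟫ - c) := by
  have key : ∀ (v : Euc d) (c : ℝ), ((∀ x ∈ S, red x → c < ⟪v, x⟫) ∧
      (∀ x ∈ S, ¬ red x → ⟪v, x⟫ < c)) ↔ ∀ x ∈ S, 0 < colorSign red x * (⟪v, x⟫ - c) := by
    intro v c
    simp only [colorSign]
    refine ⟨fun h x hx => ?_, fun h => ⟨fun x hx hr => ?_, fun x hx hr => ?_⟩⟩
    · split_ifs with hr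
      · linarith [h.1 x hx hr]
      · linarith [h.2 x hx hr]
    · simpa [hr] using h x hx
    · have := h x hx
      simp only [hr, if_false] at this
      linarith
  simp only [SepAlongColors, key]

def pinnedSeparators (p x : Euc d) : Set (Euc d) :=
  {v | 0 < colorSign red x * (⟪x - p, v⟫ + colorSign red p)}

theorem isOpen_pinnedSeparators (p x : Euc d) : IsOpen (pinnedSeparators red p x) :=
  isOpen_lt continuous_const (by fun_prop)

theorem convex_pinnedSeparators (p x : Euc d) : Convex ℝ (pinnedSeparators red p x) := by
  have : pinnedSeparators red p x =
      {v | -(colorSign red x * colorSign red p) < innerₛₗ ℝ (colorSign red x • (x - p)) v} := by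
    ext v
    simp only [pinnedSeparators, Set.mem_ofPred_eq, innerₛₗ_apply_apply, real_inner_smul_left]
    constructor <;> intro h <;> linarith
  rw [this]
  exact convex_halfSpace_gt (innerₛₗ ℝ _).isLinear _

theorem SepAlongColors.exists_forall_mem_pinnedSeparators {S : Set (Euc d)} {p : Euc d}
    (hp : p ∈ S) (hS : SepAlongColors red S) : ∃ v, ∀ x ∈ S, v ∈ pinnedSeparators red p x := by
  obtain ⟨v, c, -, hv⟩ := (sepAlongColors_iff_exists_colorSign_mul_pos red S).1 hS
  set t := colorSign red p * (⟪v, p⟫ - c)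
  have ht : 0 < t := hv p hp
  have hpc : ⟪v, p⟫ - c = colorSign red p * t := by
    rw [← mul_assoc, colorSign_mul_self, one_mul]
  refine ⟨t⁻¹ • v, fun x hx => ?_⟩
  have hscale : colorSign red x * (⟪x - p, t⁻¹ • v⟫ + colorSign red p)
      = t⁻¹ * (colorSign red x * (⟪v, x⟫ - c)) := by
    rw [real_inner_smul_right, real_inner_comm, inner_sub_right,
      show ⟪v, x⟫ - ⟪v, p⟫ = (⟪v, x⟫ - c) - colorSign red p * t by rw [← hpc]; ring]
    field_simp
    ring
  simpa only [pinnedSeparators, Set.mem_ofPred_eq, hscale] using mul_pos (inv_pos.2 ht) (hv x hx)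

theorem sepAlongColors_of_forall_mem_pinnedSeparators {S : Set (Euc d)} {p v : Euc d}
    (hv : v ≠ 0) (h : ∀ x ∈ S, v ∈ pinnedSeparators red p x) : SepAlongColors red S := by
  refine (sepAlongColors_iff_exists_colorSign_mul_pos red S).2
    ⟨v, ⟪v, p⟫ - colorSign red p, hv, fun x hx => ?_⟩
  have := h x hx
  rwa [pinnedSeparators, Set.mem_ofPred_eq, real_inner_comm, inner_sub_right,
    show ⟪v, x⟫ - ⟪v, p⟫ + colorSign red p = ⟪v, x⟫ - (⟪v, p⟫ - colorSign red p) by ring] at this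

end PinnedSeparators

theorem stmt12_general {d : ℕ} (X : Set (Euc d)) (hX : X.Finite)
    (red : Euc d → Prop) (p : Euc d) (hp : p ∈ X)
    (h : ∀ S ⊆ X, p ∈ S → S.ncard ≤ d + 2 → SepAlongColors red S) :
    SepAlongColors red X := by
  obtain ⟨u, c, hu, -⟩ := h {p} (Set.singleton_subset_iff.2 hp) rfl (by simp)
  have : Nontrivial (Euc d) := ⟨⟨u, 0, hu⟩⟩
  have hHelly : (⋂ x ∈ hX.toFinset, pinnedSeparators red p x).Nonempty := by
    refine Convex.helly_theorem' (fun x _ => convex_pinnedSeparators red p x) fun I hI hcard => ?_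
    rw [finrank_euclideanSpace_fin] at hcard
    have hIX : (I : Set (Euc d)) ⊆ X := by simpa [Set.subset_def] using hI
    obtain ⟨v, hv⟩ := (h (insert p I) (Set.insert_subset hp hIX) (Set.mem_insert p _)
      ((Set.ncard_insert_le p _).trans (by rw [Set.ncard_coe_finset]; omega))
      ).exists_forall_mem_pinnedSeparators red (Set.mem_insert p _)
    exact ⟨v, Set.mem_iInter₂.2 fun x hx => hv x (Set.mem_insert_of_mem p hx)⟩
  obtain ⟨v, hv, hv0⟩ := (isOpen_biInter_finset fun x _ => isOpen_pinnedSeparators red p x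
    ).exists_mem_ne hHelly 0
  exact sepAlongColors_of_forall_mem_pinnedSeparators red hv0 fun x hx =>
    Set.mem_iInter₂.1 hv x (hX.mem_toFinset.2 hx)

theorem stmt12 {d : ℕ} (hd : 1 ≤ d) (X : Set (Euc d)) (hX : X.Finite)
    (red : Euc d → Prop) (p : Euc d) (hp : p ∈ X)
    (h : ∀ S ⊆ X, p ∈ S → S.ncard ≤ d + 2 → SepAlongColors red S) :
    SepAlongColors red X :=
  stmt12_general X hX red p hp h
end
end

section
/- Kirchberger's theorem: Let X be a finite subset of R^d with each point colored red or blue. If every subset S ⊆ X with |S| ≤ d+2 can be separated along the colors by a hyperplane, then X can be separated along the colors by a hyperplane. -/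
open scoped RealInnerProductSpace

noncomputable section

/-! Let `R` and `B` be the red and blue points of `X`. If their convex hulls are disjoint,
Hahn–Banach separates these compact convex sets strictly. If a point `p` lies in both hulls, lift
the red points to `(x, 1)` and the blue points to `-(x, 1)` in `ℝᵈ × ℝ`: then `0` is the midpoint
of `(p, 1)` and `-(p, 1)`, so it lies in the hull of the lifted points, and by Carathéodory in
dimension `d + 1` already in the hull of `d + 2` of them. Conversely `0` in the hull of lifted
points forces equal weight on both colours, so the corresponding `S` with `|S| ≤ d + 2` has
meeting red and blue hulls and cannot be separated. -/

open Module

section Homogenize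

variable {E : Type*} [AddCommGroup E] [Module ℝ E]

def homogenize : E →ᵃ[ℝ] E × ℝ :=
  (LinearMap.inl ℝ E ℝ).toAffineMap + AffineMap.const ℝ E (0, 1)

lemma homogenize_apply (x : E) : homogenize x = (x, 1) := by
  simp [homogenize]

lemma zero_mem_convexHull_homogenize_iff (R B : Set E) :
    (0 : E × ℝ) ∈ convexHull ℝ (homogenize '' R ∪ -(homogenize '' B)) ↔
      (convexHull ℝ R ∩ convexHull ℝ B).Nonempty := by
  constructor
  · intro h0
    rcases R.eq_empty_or_nonempty with rfl | hR
    · rw [Set.image_empty, Set.empty_union, convexHull_neg, Set.mem_neg, neg_zero,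
        ← homogenize.image_convexHull] at h0
      obtain ⟨x, -, hx⟩ := h0
      simp [homogenize_apply] at hx
    rcases B.eq_empty_or_nonempty with rfl | hB
    · rw [Set.image_empty, Set.neg_empty, Set.union_empty, ← homogenize.image_convexHull] at h0
      obtain ⟨x, -, hx⟩ := h0
      simp [homogenize_apply] at hx
    rw [convexHull_union (hR.image _) (hB.image _).neg, mem_convexJoin] at h0
    obtain ⟨_, hx, _, hy, a, b, -, -, hab, h0⟩ := h0
    rw [← homogenize.image_convexHull] at hx
    rw [convexHull_neg, Set.mem_neg, ← homogenize.image_convexHull] at hy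
    obtain ⟨x, hx, rfl⟩ := hx
    obtain ⟨y, hy, hyb⟩ := hy
    obtain rfl := neg_eq_iff_eq_neg.mp hyb.symm
    simp only [homogenize_apply, Prod.ext_iff, Prod.fst_add, Prod.snd_add, Prod.smul_fst,
      Prod.smul_snd, Prod.fst_neg, Prod.snd_neg, smul_eq_mul, Prod.fst_zero, Prod.snd_zero] at h0
    obtain ⟨hxy, hab'⟩ := h0
    obtain rfl : b = a := by linarith
    have hb : b ≠ 0 := by rintro rfl; norm_num at hab
    rw [← smul_add, smul_eq_zero_iff_right hb, ← sub_eq_add_neg, sub_eq_zero] at hxy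
    exact ⟨x, hx, hxy ▸ hy⟩
  · rintro ⟨p, hpR, hpB⟩
    have h₁ : homogenize p ∈ convexHull ℝ (homogenize '' R ∪ -(homogenize '' B)) :=
      convexHull_mono Set.subset_union_left
        (homogenize.image_convexHull R ▸ Set.mem_image_of_mem _ hpR)
    have h₂ : -homogenize p ∈ convexHull ℝ (homogenize '' R ∪ -(homogenize '' B)) := by
      refine convexHull_mono Set.subset_union_right ?_
      rw [convexHull_neg, Set.mem_neg, neg_neg, ← homogenize.image_convexHull]
      exact Set.mem_image_of_mem _ hpB
    simpa only [midpoint_self_neg] using (convex_convexHull ℝ _).midpoint_mem h₁ h₂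

end Homogenize

theorem exists_ncard_le_finrank_add_two_of_convexHull_inter {E : Type*} [AddCommGroup E]
    [Module ℝ E] [FiniteDimensional ℝ E] {R B : Set E}
    (h : (convexHull ℝ R ∩ convexHull ℝ B).Nonempty) :
    ∃ S ⊆ R ∪ B, S.ncard ≤ finrank ℝ E + 2 ∧
      (convexHull ℝ (S ∩ R) ∩ convexHull ℝ (S ∩ B)).Nonempty := by
  have h0 := (zero_mem_convexHull_homogenize_iff R B).2 h
  rw [convexHull_eq_union] at h0
  simp only [Set.mem_iUnion] at h0
  obtain ⟨t, htY, ht, h0t⟩ := h0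
  have hcard : t.card ≤ finrank ℝ E + 2 := by
    have := ht.card_le_finrank_succ
    have : finrank ℝ (vectorSpan ℝ (Set.range ((↑) : t → E × ℝ))) ≤ finrank ℝ E + 1 := by
      simpa [finrank_prod] using Submodule.finrank_le (vectorSpan ℝ (Set.range ((↑) : t → E × ℝ)))
    simp only [Fintype.card_coe] at *
    omega
  -- `z.2 • z.1` undoes both lifts: it sends `(x, 1)` and `-(x, 1)` to `x`.
  refine ⟨(fun z : E × ℝ => z.2 • z.1) '' t, ?_, (Set.ncard_image_le t.finite_toSet).trans ?_, ?_⟩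
  · rintro _ ⟨z, hz, rfl⟩
    rcases htY hz with ⟨x, hx, rfl⟩ | ⟨y, hy, hyz⟩
    · simpa [homogenize_apply] using Or.inl hx
    · obtain rfl := neg_eq_iff_eq_neg.mp hyz.symm
      simpa [homogenize_apply] using Or.inr hy
  · simpa using hcard
  · refine (zero_mem_convexHull_homogenize_iff _ _).1 (convexHull_mono ?_ h0t)
    intro z hz
    rcases htY hz with ⟨x, hx, rfl⟩ | ⟨y, hy, hyz⟩
    · exact Or.inl ⟨x, ⟨⟨_, hz, by simp [homogenize_apply]⟩, hx⟩, rfl⟩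
    · obtain rfl := neg_eq_iff_eq_neg.mp hyz.symm
      exact Or.inr ⟨y, ⟨⟨_, hz, by simp [homogenize_apply]⟩, hy⟩, (neg_neg _).symm⟩

theorem exists_inner_lt_lt_of_disjoint_convexHull {E : Type*} [NormedAddCommGroup E]
    [InnerProductSpace ℝ E] [CompleteSpace E] [Nontrivial E] {s t : Set E}
    (hs : s.Finite) (ht : t.Finite) (hst : Disjoint (convexHull ℝ s) (convexHull ℝ t)) :
    ∃ v : E, v ≠ 0 ∧ ∃ c : ℝ, (∀ x ∈ s, ⟪v, x⟫ < c) ∧ ∀ y ∈ t, c < ⟪v, y⟫ := by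
  obtain ⟨v₀, hv₀⟩ := exists_ne (0 : E)
  rcases s.eq_empty_or_nonempty with rfl | ⟨x₀, hx₀⟩
  · obtain ⟨c, hc⟩ := (ht.image (⟪v₀, ·⟫)).bddBelow
    exact ⟨v₀, hv₀, c - 1, by simp, fun y hy => by linarith [hc ⟨y, hy, rfl⟩]⟩
  rcases t.eq_empty_or_nonempty with rfl | ⟨y₀, hy₀⟩
  · obtain ⟨c, hc⟩ := (hs.image (⟪v₀, ·⟫)).bddAbove
    exact ⟨v₀, hv₀, c + 1, fun x hx => by linarith [hc ⟨x, hx, rfl⟩], by simp⟩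
  obtain ⟨f, u, u', hfs, hu, hft⟩ := geometric_hahn_banach_compact_closed (convex_convexHull ℝ s)
    (hs.isCompact_convexHull (𝕜 := ℝ)) (convex_convexHull ℝ t)
    (ht.isCompact_convexHull (𝕜 := ℝ)).isClosed hst
  set v := (InnerProductSpace.toDual ℝ E).symm f
  have hv : ∀ x, ⟪v, x⟫ = f x := fun x => InnerProductSpace.toDual_symm_apply
  have hfs' : ∀ x ∈ s, ⟪v, x⟫ < u := fun x hx => hv x ▸ hfs x (subset_convexHull ℝ s hx)
  have hft' : ∀ y ∈ t, u < ⟪v, y⟫ := fun y hy =>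
    hu.trans (hv y ▸ hft y (subset_convexHull ℝ t hy))
  refine ⟨v, ?_, u, hfs', hft'⟩
  rintro hv0
  have := hfs' x₀ hx₀
  have := hft' y₀ hy₀
  simp only [hv0, inner_zero_left] at *
  linarith

theorem SepAlongColors.disjoint_convexHull {d : ℕ} {red : Euc d → Prop} {S : Set (Euc d)}
    (h : SepAlongColors red S) :
    Disjoint (convexHull ℝ {x ∈ S | ¬ red x}) (convexHull ℝ {x ∈ S | red x}) := by
  obtain ⟨v, c, -, hred, hblue⟩ := h
  refine Disjoint.mono
    (convexHull_min (fun x hx => hblue x hx.1 hx.2) (convex_halfSpace_lt (innerₛₗ ℝ v).isLinear c))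
    (convexHull_min (fun x hx => hred x hx.1 hx.2) (convex_halfSpace_gt (innerₛₗ ℝ v).isLinear c))
    (Set.disjoint_left.2 fun x (h₁ : ⟪v, x⟫ < c) (h₂ : c < ⟪v, x⟫) => lt_asymm h₁ h₂)

theorem stmt13_general {d : ℕ} (X : Set (Euc d)) (hX : X.Finite)
    (red : Euc d → Prop)
    (h : ∀ S ⊆ X, S.ncard ≤ d + 2 → SepAlongColors red S) :
    SepAlongColors red X := by
  -- `SepAlongColors` demands a nonzero normal vector, so already `S = ∅` rules out `d = 0`.
  obtain ⟨v₀, -, hv₀, -⟩ := h ∅ (Set.empty_subset X) (by simp)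
  have : Nontrivial (Euc d) := nontrivial_of_ne v₀ 0 hv₀
  have hdisj : Disjoint (convexHull ℝ {x ∈ X | ¬ red x}) (convexHull ℝ {x ∈ X | red x}) := by
    rw [Set.disjoint_iff_inter_eq_empty, ← Set.not_nonempty_iff_eq_empty]
    intro hne
    obtain ⟨S, hSX, hS, x, hxB, hxR⟩ := exists_ncard_le_finrank_add_two_of_convexHull_inter hne
    rw [finrank_euclideanSpace_fin] at hS
    have hsep := h S (hSX.trans (Set.union_subset (Set.sep_subset _ _) (Set.sep_subset _ _))) hS
    refine Set.disjoint_left.1 hsep.disjoint_convexHull (convexHull_mono ?_ hxB)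
      (convexHull_mono ?_ hxR)
    all_goals exact fun y hy => ⟨hy.1, hy.2.2⟩
  obtain ⟨v, hv, c, hblue, hred⟩ :=
    exists_inner_lt_lt_of_disjoint_convexHull (hX.sep _) (hX.sep _) hdisj
  exact ⟨v, c, hv, fun x hx hr => hred x ⟨hx, hr⟩, fun x hx hb => hblue x ⟨hx, hb⟩⟩

theorem stmt13 {d : ℕ} (hd : 1 ≤ d) (X : Set (Euc d)) (hX : X.Finite)
    (red : Euc d → Prop)
    (h : ∀ S ⊆ X, S.ncard ≤ d + 2 → SepAlongColors red S) :
    SepAlongColors red X :=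
  stmt13_general X hX red h
end
end

section
/- Let X ⊆ R^d be a set of k ≥ 2 points (not necessarily in general position). Then the maximum cardinality of a minimal transversal for the full subdivisions of H(X) is at most η_d(k) = sum_{i=0}^{d} binomial(k-2, i). -/
/-!
A minimal transversal `T` of the full subfamilies of `H(X)` must be the set of all partitions
separating some pair `a ≠ b` of points of `X`: otherwise the partitions outside `T` would still
form a full family. Each such partition is the pair `{X \ V, V}` where `V ∋ b` is an open
half-space trace, so it is determined by the trace of `V` on `Y = X \ {a, b}`, a set of `k - 2`
points. If the half-spaces containing `b` shattered `d + 1` points of `Y`, a Radon partition of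
these points together with `b` would put two intersecting convex hulls on opposite sides of a
hyperplane. So this family of traces has VC-dimension at most `d`, and the Sauer–Shelah lemma
bounds its size by `η_d(k)`.
-/

open scoped RealInnerProductSpace

noncomputable section

open Finset

theorem IsMinimalTransversal.exists_eq_sep {α : Type*} {X : Set α} {C T : Set (Set (Set α))}
    (hT : IsMinimalTransversal X C T) : ∃ a ∈ X, ∃ b ∈ X, a ≠ b ∧ T = sep C a b := by
  obtain ⟨⟨-, htrans⟩, hmin⟩ := hT
  have hnotfull : ¬ IsFull X (C \ T) := fun hfull => by
    simpa using htrans (C \ T) Set.sdiff_subset hfull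
  simp only [IsFull, not_forall] at hnotfull
  obtain ⟨a, ha, b, hb, hab, hno⟩ := hnotfull
  refine ⟨a, ha, b, hb, hab, (hmin _ ?_ ⟨fun P hP => hP.1, fun S hSC hSfull => ?_⟩).symm⟩
  · rintro P ⟨hPC, hPsep⟩
    by_contra hPT
    exact hno ⟨P, ⟨hPC, hPT⟩, hPsep⟩
  · obtain ⟨P, hPS, hPsep⟩ := hSfull a ha b hb hab
    exact ⟨P, hPS, hSC hPS, hPsep⟩

section Halfspaces

variable {E : Type*} [AddCommGroup E] [Module ℝ E]

open Classical in
def halfspaceTraces (Y : Finset E) (b : E) : Finset (Finset E) :=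
  {B ∈ Y.powerset | ∃ (f : E →ₗ[ℝ] ℝ) (c : ℝ), c < f b ∧ B = {y ∈ Y | c < f y}}

theorem affineIndependent_insert_of_forall_exists_halfspace [DecidableEq E] {s : Finset E}
    {b : E}
    (h : ∀ I ⊆ (s : Set E), ∃ (f : E →ₗ[ℝ] ℝ) (c : ℝ), c < f b ∧ ∀ y ∈ s, y ∈ I ↔ c < f y) :
    AffineIndependent ℝ ((↑) : {x // x ∈ insert b s} → E) := by
  by_contra hdep
  obtain ⟨I, hI⟩ := Convex.radon_partition hdep
  wlog hbI : (⟨b, mem_insert_self b s⟩ : {x // x ∈ insert b s}) ∈ I generalizing I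
  · exact this Iᶜ (by rwa [compl_compl, Set.inter_comm]) hbI
  have hIs : (↑) '' I \ {b} ⊆ (s : Set E) := by
    rintro _ ⟨⟨⟨y, hy⟩, -, rfl⟩, hyb⟩
    exact (mem_insert.1 hy).resolve_left hyb
  obtain ⟨f, c, hfb, hf⟩ := h _ hIs
  have hpos : (↑) '' I ⊆ {y | c < f y} := by
    rintro _ ⟨⟨y, hy⟩, hyI, rfl⟩
    by_cases hyb : y = b
    · subst hyb; exact hfb
    · exact (hf y (by simpa [hyb] using hy)).1 ⟨⟨_, hyI, rfl⟩, hyb⟩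
  have hneg : (↑) '' Iᶜ ⊆ {y | f y ≤ c} := by
    rintro _ ⟨⟨y, hy⟩, hyI, rfl⟩
    have hyb : y ≠ b := by rintro rfl; exact hyI hbI
    refine show f y ≤ c from not_lt.1 fun hlt => ?_
    obtain ⟨⟨j, hjI, hj⟩, -⟩ := (hf y (by simpa [hyb] using hy)).2 hlt
    exact hyI ((Subtype.ext hj : j = ⟨y, hy⟩) ▸ hjI)
  obtain ⟨p, hp₁, hp₂⟩ := hI
  have hp_gt : c < f p := convexHull_min hpos (convex_halfSpace_gt f.isLinear c) hp₁
  have hp_le : f p ≤ c := convexHull_min hneg (convex_halfSpace_le f.isLinear c) hp₂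
  exact hp_le.not_gt hp_gt

theorem card_le_finrank_of_shatters_halfspaceTraces [DecidableEq E] [FiniteDimensional ℝ E]
    {Y : Finset E} {b : E} (hb : b ∉ Y) {s : Finset E} (hs : (halfspaceTraces Y b).Shatters s) :
    #s ≤ Module.finrank ℝ E := by
  classical
  have hsY : s ⊆ Y := by
    obtain ⟨u, hu, hsu⟩ := hs.exists_superset
    exact hsu.trans (mem_powerset.1 (mem_filter.1 hu).1)
  have hind := affineIndependent_insert_of_forall_exists_halfspace (s := s) (b := b)
    fun I _ => by
      obtain ⟨u, hu, hsu⟩ := hs (filter_subset (· ∈ I) s)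
      obtain ⟨-, f, c, hfb, rfl⟩ := mem_filter.1 hu
      refine ⟨f, c, hfb, fun y hy => ?_⟩
      simpa [hy, hsY hy] using (congrArg (y ∈ ·) hsu).symm
  have hcard := hind.card_le_finrank_succ
  rw [Fintype.card_coe, card_insert_of_notMem fun h => hb (hsY h)] at hcard
  have := Submodule.finrank_le (vectorSpan ℝ (Set.range ((↑) : {x // x ∈ insert b s} → E)))
  omega

end Halfspaces

theorem Finset.card_le_sum_choose_of_forall_shatters {α : Type*} [DecidableEq α]
    {𝒜 : Finset (Finset α)} {Y : Finset α} {d : ℕ} (h𝒜 : 𝒜 ⊆ Y.powerset)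
    (hd : ∀ s, 𝒜.Shatters s → #s ≤ d) : #𝒜 ≤ ∑ i ∈ range (d + 1), (#Y).choose i := by
  have hsh : 𝒜.shatterer ⊆ (range (d + 1)).biUnion Y.powersetCard := fun s hs => by
    have hsY : s ⊆ Y := by
      obtain ⟨u, hu, hsu⟩ := (mem_shatterer.1 hs).exists_superset
      exact hsu.trans (mem_powerset.1 (h𝒜 hu))
    exact mem_biUnion.2 ⟨#s, mem_range.2 (Nat.lt_succ_of_le (hd s (mem_shatterer.1 hs))),
      mem_powersetCard.2 ⟨hsY, rfl⟩⟩
  calc #𝒜 ≤ #𝒜.shatterer := card_le_card_shatterer 𝒜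
    _ ≤ #((range (d + 1)).biUnion Y.powersetCard) := card_le_card hsh
    _ ≤ ∑ i ∈ range (d + 1), (#Y).choose i := by
      simpa only [card_powersetCard] using
        card_biUnion_le (s := range (d + 1)) (t := Y.powersetCard)

theorem RealizedByHyperplane.eq_pair_of_mem {d : ℕ} {X : Set (Euc d)} {P : Set (Set (Euc d))}
    {U V : Set (Euc d)} (hP : RealizedByHyperplane X P) (hU : U ∈ P) (hV : V ∈ P)
    (hUV : U ≠ V) : P = {U, V} ∧ U = X \ V ∧ ∃ (v : Euc d) (c : ℝ), V = X ∩ {x | c < ⟪v, x⟫} := by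
  rcases hP with rfl | ⟨v, c, -, hne, -, -, rfl⟩
  · exact absurd ((Set.mem_singleton_iff.1 hU).trans (Set.mem_singleton_iff.1 hV).symm) hUV
  have hlt : X ∩ {x | ⟪v, x⟫ < c} = X \ (X ∩ {x | c < ⟪v, x⟫}) := by
    ext x
    simp only [Set.mem_inter_iff, Set.mem_ofPred_eq, Set.mem_sdiff, not_and, not_lt]
    exact ⟨fun ⟨hx, h⟩ => ⟨hx, fun _ => h.le⟩, fun ⟨hx, h⟩ => ⟨hx, (h hx).lt_of_ne (hne x hx)⟩⟩
  rcases hU with rfl | rfl <;> rcases hV with rfl | rfl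
  · exact absurd rfl hUV
  · exact ⟨rfl, hlt, v, c, rfl⟩
  · refine ⟨Set.pair_comm _ _, ?_, -v, -c, ?_⟩
    · rw [hlt, Set.sdiff_sdiff_cancel_left Set.inter_subset_left]
    · ext x; simp [inner_neg_left]
  · exact absurd rfl hUV

theorem ncard_sep_hSet_le {d : ℕ} {X : Set (Euc d)} (hX : X.Finite) {a b : Euc d} (ha : a ∈ X)
    (hb : b ∈ X) (hab : a ≠ b) : (sep (HSet X) a b).ncard ≤ eta d X.ncard := by
  classical
  set Y := hX.toFinset \ {a, b}
  have hbY : b ∉ Y := by simp [Y]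
  have hYcard : #Y = X.ncard - 2 := by
    rw [card_sdiff_of_subset (by simp [Set.insert_subset_iff, ha, hb]), card_pair hab,
      Set.ncard_eq_toFinset_card X hX]
  set G : Finset (Euc d) → Set (Set (Euc d)) := fun B => {X \ insert b ↑B, insert b ↑B}
  have hsep : sep (HSet X) a b ⊆ G '' ↑(halfspaceTraces Y b) := by
    rintro P ⟨hP, U, hU, V, hV, hUV, haU, hbV⟩
    obtain ⟨hPUV, rfl, v, c, rfl⟩ := RealizedByHyperplane.eq_pair_of_mem hP hU hV hUV
    refine ⟨{y ∈ Y | c < ⟪v, y⟫}, mem_filter.2 ⟨mem_powerset.2 (filter_subset _ _), innerₛₗ ℝ v,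
      c, hbV.2, by ext; rw [mem_filter, mem_filter]; rfl⟩, ?_⟩
    have hV : insert b ↑{y ∈ Y | c < ⟪v, y⟫} = X ∩ {x | c < ⟪v, x⟫} := by
      ext x
      by_cases hxb : x = b
      · subst hxb; simpa using hbV
      · by_cases hxa : x = a
        · subst hxa; exact iff_of_false (by simp [Y, hab]) haU.2
        · simp [Y, hxa, hxb]
    simp only [G, hV, hPUV]
  calc (sep (HSet X) a b).ncard ≤ (G '' ↑(halfspaceTraces Y b)).ncard :=
        Set.ncard_le_ncard hsep (Set.toFinite _)
    _ ≤ #(halfspaceTraces Y b) := by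
        simpa only [Set.ncard_coe_finset] using Set.ncard_image_le (finite_toSet _)
    _ ≤ ∑ i ∈ range (d + 1), (#Y).choose i :=
        card_le_sum_choose_of_forall_shatters (filter_subset _ _) fun s hs =>
          (card_le_finrank_of_shatters_halfspaceTraces hbY hs).trans_eq finrank_euclideanSpace_fin
    _ = eta d X.ncard := by rw [hYcard, eta]

theorem stmt17_general {d k : ℕ} (X : Set (Euc d)) (hX : X.Finite) (hk : X.ncard = k)
    (T : Set (Set (Set (Euc d))))
    (hT : IsMinimalTransversal X (HSet X) T) :
    T.ncard ≤ eta d k := by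
  obtain ⟨a, ha, b, hb, hab, rfl⟩ := hT.exists_eq_sep
  exact hk ▸ ncard_sep_hSet_le hX ha hb hab

theorem stmt17 {d k : ℕ} (X : Set (Euc d)) (hX : X.Finite) (hk : X.ncard = k)
    (hk2 : 2 ≤ k) (T : Set (Set (Set (Euc d))))
    (hT : IsMinimalTransversal X (HSet X) T) :
    T.ncard ≤ eta d k :=
  stmt17_general X hX hk T hT
end
end

section
/- Let X ⊆ R^d be a finite set and X' the image of X under a projective transformation sending a hyperplane h_P (which separates two given points a, b ∈ X and avoids X) to the hyperplane at infinity; let a', b' be the images of a, b. Then there is a bijection between the hyperplane-realizable partitions of X that do NOT separate a and b, and the hyperplane-realizable partitions of X' that DO separate a' and b'. -/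
open scoped RealInnerProductSpace

noncomputable section

/-!
Write `t x = ⟪v, x⟫ - c`. An affine functional `g` of the old chart corresponds to an affine
functional of the new chart whose value at the image of `x` is `g x / t x`, and every affine
functional of the new chart arises this way. Hence two points end up on the same side of the new
hyperplane exactly when "same side of `g`" and "same side of `h_P`" agree. As `h_P` separates `a`
and `b`, this flip exchanges the partitions not separating `a, b` with those separating their
images, and flipping twice gives back the original partition.
-/

section Blocks

variable {α β : Type*}

def SameBlock (P : Set (Set α)) (x y : α) : Prop := ∃ B ∈ P, x ∈ B ∧ y ∈ B

def blocks (Y : Set α) (r : α → α → Prop) : Set (Set α) := {B | ∃ x ∈ Y, B = {y ∈ Y | r x y}}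

def sidePartition (Y : Set α) (p : α → Prop) : Set (Set α) := blocks Y fun x y => p x ↔ p y

def flipBlocks (Y : Set α) (σ : α → Prop) (r : α → α → Prop) : Set (Set α) :=
  blocks Y fun x y => r x y ↔ (σ x ↔ σ y)

lemma blocks_congr {Y : Set α} {r s : α → α → Prop} (h : ∀ x ∈ Y, ∀ y ∈ Y, r x y ↔ s x y) :
    blocks Y r = blocks Y s := by
  ext B
  constructor <;> rintro ⟨x, hx, rfl⟩ <;> refine ⟨x, hx, Set.sep_ext_iff.2 fun y hy => ?_⟩
  exacts [h x hx y hy, (h x hx y hy).symm]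

lemma sameBlock_sidePartition_iff {Y : Set α} {p : α → Prop} {x y : α} (hx : x ∈ Y)
    (hy : y ∈ Y) : SameBlock (sidePartition Y p) x y ↔ (p x ↔ p y) := by
  constructor
  · rintro ⟨_, ⟨z, -, rfl⟩, ⟨-, hzx⟩, ⟨-, hzy⟩⟩
    exact hzx.symm.trans hzy
  · exact fun hxy => ⟨_, ⟨x, hx, rfl⟩, ⟨hx, Iff.rfl⟩, ⟨hy, hxy⟩⟩

lemma separates_sidePartition_iff {Y : Set α} {p : α → Prop} {a b : α} (ha : a ∈ Y)
    (hb : b ∈ Y) : Separates (sidePartition Y p) a b ↔ ¬(p a ↔ p b) := by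
  constructor
  · rintro ⟨_, ⟨x, -, rfl⟩, _, ⟨y, -, rfl⟩, hxy, ⟨-, hxa⟩, ⟨-, hyb⟩⟩ hab
    exact hxy (Set.sep_ext_iff.2 fun z _ => by tauto)
  · intro hab
    refine ⟨_, ⟨a, ha, rfl⟩, _, ⟨b, hb, rfl⟩, fun h => hab ?_, ⟨ha, Iff.rfl⟩, ⟨hb, Iff.rfl⟩⟩
    exact ((Set.ext_iff.1 h b).2 ⟨hb, Iff.rfl⟩).2

lemma sidePartition_eq_singleton {Y : Set α} {p : α → Prop} (hY : Y.Nonempty)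
    (h : ∀ x ∈ Y, ∀ y ∈ Y, p x ↔ p y) : sidePartition Y p = {Y} := by
  obtain ⟨x₀, hx₀⟩ := hY
  have hblock : ∀ x ∈ Y, {y ∈ Y | p x ↔ p y} = Y := fun x hx =>
    Set.sep_eq_self_iff_mem_true.2 (h x hx)
  ext B
  constructor
  · rintro ⟨x, hx, rfl⟩
    exact hblock x hx
  · rintro rfl
    exact ⟨x₀, hx₀, (hblock x₀ hx₀).symm⟩

lemma sidePartition_eq_pair {Y : Set α} {p : α → Prop} {x y : α} (hx : x ∈ Y) (hpx : ¬p x)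
    (hy : y ∈ Y) (hpy : p y) : sidePartition Y p = {{z ∈ Y | ¬p z}, {z ∈ Y | p z}} := by
  have hpos : ∀ z, p z → {z' ∈ Y | p z ↔ p z'} = {z ∈ Y | p z} :=
    fun z hz => Set.sep_ext_iff.2 fun z' _ => by tauto
  have hneg : ∀ z, ¬p z → {z' ∈ Y | p z ↔ p z'} = {z ∈ Y | ¬p z} :=
    fun z hz => Set.sep_ext_iff.2 fun z' _ => by tauto
  ext B
  constructor
  · rintro ⟨z, -, rfl⟩
    by_cases hz : p z
    · exact Or.inr (hpos z hz)
    · exact Or.inl (hneg z hz)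
  · rintro (rfl | rfl)
    exacts [⟨x, hx, (hneg x hpx).symm⟩, ⟨y, hy, (hpos y hpy).symm⟩]

lemma image_sidePartition (f : α → β) (X : Set α) (q : β → Prop) :
    Set.image f '' sidePartition X (fun x => q (f x)) = sidePartition (f '' X) q := by
  have himage : ∀ x, f '' {y ∈ X | q (f x) ↔ q (f y)} = {z ∈ f '' X | q (f x) ↔ q z} :=
    fun x => Set.image_inter_preimage f X {z | q (f x) ↔ q z}
  ext B
  constructor
  · rintro ⟨_, ⟨x, hx, rfl⟩, rfl⟩
    exact ⟨f x, Set.mem_image_of_mem f hx, himage x⟩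
  · rintro ⟨_, ⟨x, hx, rfl⟩, rfl⟩
    exact ⟨_, ⟨x, hx, rfl⟩, himage x⟩

variable {X : Set α} {f : α → β} {σ p : α → Prop} {q : β → Prop}

lemma image_flipBlocks_sidePartition (hlink : ∀ x ∈ X, q (f x) ↔ (σ x ↔ p x)) :
    Set.image f '' flipBlocks X σ (SameBlock (sidePartition X p)) = sidePartition (f '' X) q := by
  rw [← image_sidePartition]
  refine congrArg _ (blocks_congr fun x hx y hy => ?_)
  dsimp only
  rw [sameBlock_sidePartition_iff hx hy, hlink x hx, hlink y hy]
  tauto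

lemma flipBlocks_sidePartition_image (hlink : ∀ x ∈ X, q (f x) ↔ (σ x ↔ p x)) :
    flipBlocks X σ (fun x y => SameBlock (sidePartition (f '' X) q) (f x) (f y)) =
      sidePartition X p := by
  refine blocks_congr fun x hx y hy => ?_
  dsimp only
  rw [sameBlock_sidePartition_iff (Set.mem_image_of_mem f hx) (Set.mem_image_of_mem f hy),
    hlink x hx, hlink y hy]
  tauto

end Blocks

theorem nonempty_equiv_flip {α β : Type*} {X : Set α} {f : α → β} {σ : α → Prop} {a b : α}
    (ha : a ∈ X) (hb : b ∈ X) (hσ : ¬(σ a ↔ σ b))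
    {H : Set (Set (Set α))} {H' : Set (Set (Set β))}
    (hH : ∀ P ∈ H, ∃ (p : α → Prop) (q : β → Prop), P = sidePartition X p ∧
      sidePartition (f '' X) q ∈ H' ∧ ∀ x ∈ X, q (f x) ↔ (σ x ↔ p x))
    (hH' : ∀ Q ∈ H', ∃ (p : α → Prop) (q : β → Prop), Q = sidePartition (f '' X) q ∧
      sidePartition X p ∈ H ∧ ∀ x ∈ X, q (f x) ↔ (σ x ↔ p x)) :
    Nonempty ({P | P ∈ H ∧ ¬Separates P a b} ≃ {Q | Q ∈ H' ∧ Separates Q (f a) (f b)}) := by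
  have hfa := Set.mem_image_of_mem f ha
  have hfb := Set.mem_image_of_mem f hb
  refine ⟨{ toFun := fun P => ⟨Set.image f '' flipBlocks X σ (SameBlock P.1), ?_⟩
            invFun := fun Q => ⟨flipBlocks X σ (fun x y => SameBlock Q.1 (f x) (f y)), ?_⟩
            left_inv := fun P => Subtype.ext ?_
            right_inv := fun Q => Subtype.ext ?_ }⟩
  · obtain ⟨P, hP, hPab⟩ := P
    obtain ⟨p, q, rfl, hQ, hlink⟩ := hH P hP
    rw [separates_sidePartition_iff ha hb, not_not] at hPab
    rw [image_flipBlocks_sidePartition hlink]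
    refine ⟨hQ, ?_⟩
    rw [separates_sidePartition_iff hfa hfb, hlink a ha, hlink b hb]
    tauto
  · obtain ⟨Q, hQ, hQab⟩ := Q
    obtain ⟨p, q, rfl, hP, hlink⟩ := hH' Q hQ
    rw [separates_sidePartition_iff hfa hfb, hlink a ha, hlink b hb] at hQab
    rw [flipBlocks_sidePartition_image hlink]
    refine ⟨hP, ?_⟩
    rw [separates_sidePartition_iff ha hb, not_not]
    tauto
  · obtain ⟨P, hP, -⟩ := P
    obtain ⟨p, q, rfl, -, hlink⟩ := hH P hP
    dsimp only
    rw [image_flipBlocks_sidePartition hlink, flipBlocks_sidePartition_image hlink]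
  · obtain ⟨Q, hQ, -⟩ := Q
    obtain ⟨p, q, rfl, -, hlink⟩ := hH' Q hQ
    dsimp only
    rw [flipBlocks_sidePartition_image hlink, image_flipBlocks_sidePartition hlink]

lemma pos_inv_mul_iff {a b : ℝ} (ha : a ≠ 0) (hb : b ≠ 0) : 0 < a⁻¹ * b ↔ (0 < a ↔ 0 < b) := by
  rcases ha.lt_or_gt with ha | ha <;> rcases hb.lt_or_gt with hb | hb <;>
    simp [mul_pos_iff, ha, hb, ha.not_gt, hb.not_gt]

section ProjChart

variable {E : Type*} [NormedAddCommGroup E] [InnerProductSpace ℝ E] {v w : E} {c k : ℝ} {x : E}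

def projChart (v : E) (c : ℝ) (x : E) : E := (⟪v, x⟫ - c)⁻¹ • (x - ((c + 1) / ‖v‖ ^ 2) • v)

/-- The whole geometric input: affine functionals transform by division by `⟪v, x⟫ - c`. -/
lemma inner_projChart_sub (hv : v ≠ 0) (hx : ⟪v, x⟫ ≠ c) (w : E) (k : ℝ) :
    ⟪w + k • v, projChart v c x⟫ - k =
      (⟪v, x⟫ - c)⁻¹ * (⟪w, x⟫ - (k + (c + 1) / ‖v‖ ^ 2 * ⟪w, v⟫)) := by
  have hN : ‖v‖ ^ 2 ≠ 0 := pow_ne_zero 2 (norm_ne_zero_iff.mpr hv)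
  have ht : ⟪v, x⟫ - c ≠ 0 := sub_ne_zero.mpr hx
  simp only [projChart, inner_add_left, real_inner_smul_left, inner_sub_right,
    real_inner_smul_right, real_inner_self_eq_norm_sq]
  field_simp
  ring

lemma inner_projChart_ne_iff (hv : v ≠ 0) (hx : ⟪v, x⟫ ≠ c) :
    ⟪w + k • v, projChart v c x⟫ ≠ k ↔ ⟪w, x⟫ ≠ k + (c + 1) / ‖v‖ ^ 2 * ⟪w, v⟫ := by
  rw [← sub_ne_zero, inner_projChart_sub hv hx, ← sub_ne_zero (b := _ + _)]
  exact ⟨right_ne_zero_of_mul, mul_ne_zero (inv_ne_zero (sub_ne_zero.mpr hx))⟩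

lemma lt_inner_projChart_iff (hv : v ≠ 0) (hx : ⟪v, x⟫ ≠ c)
    (hwx : ⟪w, x⟫ ≠ k + (c + 1) / ‖v‖ ^ 2 * ⟪w, v⟫) :
    k < ⟪w + k • v, projChart v c x⟫ ↔ (c < ⟪v, x⟫ ↔ k + (c + 1) / ‖v‖ ^ 2 * ⟪w, v⟫ < ⟪w, x⟫) := by
  rw [← sub_pos, inner_projChart_sub hv hx,
    pos_inv_mul_iff (sub_ne_zero.mpr hx) (sub_ne_zero.mpr hwx), sub_pos, sub_pos]

end ProjChart

section Hyperplanes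

variable {E : Type*} [NormedAddCommGroup E] [InnerProductSpace ℝ E] {v : E} {c : ℝ} {X : Set E}

lemma exists_hyperplane_image (hv : v ≠ 0) (havoid : ∀ x ∈ X, ⟪v, x⟫ ≠ c) {w : E} {e : ℝ}
    (hwe : ∀ x ∈ X, ⟪w, x⟫ ≠ e) :
    ∃ (w' : E) (e' : ℝ), (∀ y ∈ projChart v c '' X, ⟪w', y⟫ ≠ e') ∧
      ∀ x ∈ X, e' < ⟪w', projChart v c x⟫ ↔ (c < ⟪v, x⟫ ↔ e < ⟪w, x⟫) := by
  obtain ⟨k, rfl⟩ : ∃ k, k + (c + 1) / ‖v‖ ^ 2 * ⟪w, v⟫ = e := ⟨_, sub_add_cancel _ _⟩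
  refine ⟨w + k • v, k, ?_, fun x hx => lt_inner_projChart_iff hv (havoid x hx) (hwe x hx)⟩
  rintro _ ⟨x, hx, rfl⟩
  exact (inner_projChart_ne_iff hv (havoid x hx)).2 (hwe x hx)

lemma exists_hyperplane_preimage (hv : v ≠ 0) (havoid : ∀ x ∈ X, ⟪v, x⟫ ≠ c) {w' : E} {e' : ℝ}
    (hwe' : ∀ y ∈ projChart v c '' X, ⟪w', y⟫ ≠ e') :
    ∃ (w : E) (e : ℝ), (∀ x ∈ X, ⟪w, x⟫ ≠ e) ∧
      ∀ x ∈ X, e' < ⟪w', projChart v c x⟫ ↔ (c < ⟪v, x⟫ ↔ e < ⟪w, x⟫) := by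
  obtain ⟨w, rfl⟩ : ∃ w, w + e' • v = w' := ⟨_, sub_add_cancel w' (e' • v)⟩
  have hwe : ∀ x ∈ X, ⟪w, x⟫ ≠ e' + (c + 1) / ‖v‖ ^ 2 * ⟪w, v⟫ := fun x hx =>
    (inner_projChart_ne_iff hv (havoid x hx)).1 (hwe' _ (Set.mem_image_of_mem _ hx))
  exact ⟨w, _, hwe, fun x hx => lt_inner_projChart_iff hv (havoid x hx) (hwe x hx)⟩

end Hyperplanes

section HSet

variable {d : ℕ}

lemma mem_HSet_iff {Y : Set (Euc d)} (hY : Y.Nonempty) {P : Set (Set (Euc d))} :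
    P ∈ HSet Y ↔ ∃ (w : Euc d) (e : ℝ), (∀ y ∈ Y, ⟪w, y⟫ ≠ e) ∧
      P = sidePartition Y fun y => e < ⟪w, y⟫ := by
  have hlt : ∀ {w : Euc d} {e : ℝ}, (∀ y ∈ Y, ⟪w, y⟫ ≠ e) →
      Y ∩ {y | ⟪w, y⟫ < e} = {y ∈ Y | ¬e < ⟪w, y⟫} := fun hwe =>
    Set.sep_ext_iff.2 fun y hy => (hwe y hy).le_iff_lt.symm.trans not_lt.symm
  constructor
  · rintro (rfl | ⟨w, e, -, hwe, ⟨x, hx, hxe⟩, ⟨y, hy, hye⟩, rfl⟩)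
    · exact ⟨0, -1, by simp, (sidePartition_eq_singleton hY (by simp)).symm⟩
    · refine ⟨w, e, hwe, ?_⟩
      rw [sidePartition_eq_pair (p := fun y => e < ⟪w, y⟫) hx (lt_asymm hxe) hy hye, hlt hwe]
      rfl
  · rintro ⟨w, e, hwe, rfl⟩
    by_cases hall : ∀ x ∈ Y, ∀ y ∈ Y, (e < ⟪w, x⟫ ↔ e < ⟪w, y⟫)
    · exact Or.inl (sidePartition_eq_singleton hY hall)
    obtain ⟨x, hx, hxe, y, hy, hye⟩ : ∃ x ∈ Y, ¬e < ⟪w, x⟫ ∧ ∃ y ∈ Y, e < ⟪w, y⟫ := by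
      simp only [not_forall] at hall
      obtain ⟨x, hx, y, hy, hxy⟩ := hall
      by_cases hxe : e < ⟪w, x⟫
      exacts [⟨y, hy, fun hye => hxy (iff_of_true hxe hye), x, hx, hxe⟩,
        ⟨x, hx, hxe, y, hy, by tauto⟩]
    have hw : w ≠ 0 := by
      rintro rfl
      simp only [inner_zero_left] at hxe hye
      exact hxe hye
    refine Or.inr ⟨w, e, hw, hwe, ⟨x, hx, (hwe x hx).lt_of_le (not_lt.1 hxe)⟩, ⟨y, hy, hye⟩, ?_⟩
    rw [sidePartition_eq_pair hx hxe hy hye, hlt hwe]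
    rfl

variable {X : Set (Euc d)} {v : Euc d} {c : ℝ}

lemma exists_linked_of_mem_HSet (hv : v ≠ 0) (havoid : ∀ x ∈ X, ⟪v, x⟫ ≠ c) (hX : X.Nonempty)
    {P : Set (Set (Euc d))} (hP : P ∈ HSet X) :
    ∃ p q : Euc d → Prop, P = sidePartition X p ∧
      sidePartition (projChart v c '' X) q ∈ HSet (projChart v c '' X) ∧
      ∀ x ∈ X, q (projChart v c x) ↔ (c < ⟪v, x⟫ ↔ p x) := by
  obtain ⟨w, e, hwe, rfl⟩ := (mem_HSet_iff hX).1 hP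
  obtain ⟨w', e', hwe', hlink⟩ := exists_hyperplane_image hv havoid hwe
  exact ⟨_, _, rfl, (mem_HSet_iff (hX.image _)).2 ⟨w', e', hwe', rfl⟩, hlink⟩

lemma exists_linked_of_mem_HSet_image (hv : v ≠ 0) (havoid : ∀ x ∈ X, ⟪v, x⟫ ≠ c)
    (hX : X.Nonempty) {Q : Set (Set (Euc d))} (hQ : Q ∈ HSet (projChart v c '' X)) :
    ∃ p q : Euc d → Prop, Q = sidePartition (projChart v c '' X) q ∧
      sidePartition X p ∈ HSet X ∧ ∀ x ∈ X, q (projChart v c x) ↔ (c < ⟪v, x⟫ ↔ p x) := by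
  obtain ⟨w', e', hwe', rfl⟩ := (mem_HSet_iff (hX.image _)).1 hQ
  obtain ⟨w, e, hwe, hlink⟩ := exists_hyperplane_preimage hv havoid hwe'
  exact ⟨_, _, rfl, (mem_HSet_iff hX).2 ⟨w, e, hwe, rfl⟩, hlink⟩

end HSet

theorem stmt18_general {d : ℕ} (X : Set (Euc d)) (a b : Euc d)
    (ha : a ∈ X) (hb : b ∈ X) (v : Euc d) (c : ℝ)
    (havoid : ∀ x ∈ X, ⟪v, x⟫ ≠ c)
    (hsepa : ⟪v, a⟫ < c) (hsepb : c < ⟪v, b⟫) :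
    ∀ f : Euc d → Euc d,
      (f = fun x => (⟪v, x⟫ - c)⁻¹ • (x - ((c + 1) / ‖v‖ ^ 2) • v)) →
      Nonempty (({P : Set (Set (Euc d)) | P ∈ HSet X ∧ ¬ Separates P a b}) ≃
        ({Q : Set (Set (Euc d)) | Q ∈ HSet (f '' X) ∧ Separates Q (f a) (f b)})) := by
  rintro f rfl
  have hv : v ≠ 0 := by
    rintro rfl
    simp only [inner_zero_left] at hsepa hsepb
    exact lt_asymm hsepa hsepb
  exact nonempty_equiv_flip (f := projChart v c) (σ := fun x => c < ⟪v, x⟫) ha hb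
    (fun h => lt_asymm hsepa (h.2 hsepb))
    (fun P => exists_linked_of_mem_HSet hv havoid ⟨a, ha⟩)
    (fun Q => exists_linked_of_mem_HSet_image hv havoid ⟨a, ha⟩)

theorem stmt18 {d : ℕ} (X : Set (Euc d)) (hX : X.Finite) (a b : Euc d)
    (ha : a ∈ X) (hb : b ∈ X) (v : Euc d) (c : ℝ) (hv : v ≠ 0)
    (havoid : ∀ x ∈ X, ⟪v, x⟫ ≠ c)
    (hsepa : ⟪v, a⟫ < c) (hsepb : c < ⟪v, b⟫) :
    ∀ f : Euc d → Euc d,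
      (f = fun x => (⟪v, x⟫ - c)⁻¹ • (x - ((c + 1) / ‖v‖ ^ 2) • v)) →
      Nonempty (({P : Set (Set (Euc d)) | P ∈ HSet X ∧ ¬ Separates P a b}) ≃
        ({Q : Set (Set (Euc d)) | Q ∈ HSet (f '' X) ∧ Separates Q (f a) (f b)})) :=
  stmt18_general X a b ha hb v c havoid hsepa hsepb
end
end
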